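/- arXiv:0912.0532 — 11 statements merged into one kernel-verified Lean document; each statement's English description precedes it below -/
import Mathlib

section
/- Let N ≥ 0 be an integer, let ℓ_0, …, ℓ_N be positive integers, let a be a real number, and define x_{-1} = a, x_0 = 1, and x_{j+1} = x_{j-1} − ℓ_j x_j for 0 ≤ j ≤ N; assume x_j > 0 for 0 ≤ j ≤ N and x_{N+1} = 0. Then Σ_{j=0}^N ℓ_j x_j² = a, Σ_{j=0}^N ℓ_j x_j = a + 1 − x_N, and x_N = 1/q_N, where q_N is the convergent denominator of [ℓ_0; ℓ_1, …, ℓ_N]. (This expresses that the weight expansion w(a) of a rational a = p/q > 1 in lowest terms — the sequence in which x_j occurs with multiplicity ℓ_j — satisfies w·w = a, Σ_i w_i = a + 1 − 1/q, and has last entry 1/q.) -/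
/-!
Each recurrence step reads `ℓ_j x_j = x_{j-1} - x_{j+1}`. Multiplying by `x_j`, resp. by `1`,
makes both sums telescope, to `x_{-1} x_0 - x_N x_{N+1}` and `x_{-1} + x_0 - x_N - x_{N+1}`.
For the last entry, `q_k x_k + q_{k-1} x_{k+1}` is invariant in `k` (the recurrences of `q` and
`x` are adjoint), so it equals `q_0 x_0 = 1`; at `k = N` this gives `q_N x_N = 1`.
-/

namespace WeightExpansion

open Finset

variable {ℓ : ℕ → ℕ} {x : ℕ → ℝ} {n : ℕ}

theorem mul_weight_eq_sub (hrec : ∀ j ≤ n, x (j + 2) = x j - (ℓ j : ℝ) * x (j + 1)) {j : ℕ}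
    (hj : j ∈ range (n + 1)) : (ℓ j : ℝ) * x (j + 1) = x j - x (j + 2) := by
  rw [hrec j (Nat.lt_succ_iff.mp (mem_range.mp hj))]
  ring

theorem sum_mul_weight_sq (hrec : ∀ j ≤ n, x (j + 2) = x j - (ℓ j : ℝ) * x (j + 1)) :
    ∑ j ∈ range (n + 1), (ℓ j : ℝ) * x (j + 1) ^ 2 = x 0 * x 1 - x (n + 1) * x (n + 2) := by
  have hstep : ∀ j ∈ range (n + 1), (ℓ j : ℝ) * x (j + 1) ^ 2
      = x j * x (j + 1) - x (j + 1) * x (j + 1 + 1) := by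
    intro j hj
    linear_combination x (j + 1) * mul_weight_eq_sub hrec hj
  rw [sum_congr rfl hstep, sum_range_sub' (fun i => x i * x (i + 1))]

theorem sum_mul_weight (hrec : ∀ j ≤ n, x (j + 2) = x j - (ℓ j : ℝ) * x (j + 1)) :
    ∑ j ∈ range (n + 1), (ℓ j : ℝ) * x (j + 1) = x 0 + x 1 - x (n + 1) - x (n + 2) := by
  have hstep : ∀ j ∈ range (n + 1), (ℓ j : ℝ) * x (j + 1)
      = (x j + x (j + 1)) - (x (j + 1) + x (j + 1 + 1)) := by
    intro j hj
    linear_combination mul_weight_eq_sub hrec hj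
  rw [sum_congr rfl hstep, sum_range_sub' (fun i => x i + x (i + 1))]
  ring

theorem convergentDenom_mul_weight_add {q : ℕ → ℕ}
    (hrec : ∀ j ≤ n, x (j + 2) = x j - (ℓ j : ℝ) * x (j + 1))
    (hq0 : q 0 = 0) (hq1 : q 1 = 1)
    (hqrec : ∀ k, 1 ≤ k → k ≤ n → q (k + 1) = ℓ k * q k + q (k - 1)) :
    ∀ k ≤ n, (q (k + 1) : ℝ) * x (k + 1) + q k * x (k + 2) = x 1 := by
  intro k
  induction k with
  | zero => simp [hq0, hq1]
  | succ k ih =>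
    intro hk
    have hq : (q (k + 2) : ℝ) = ℓ (k + 1) * q (k + 1) + q k := by
      exact_mod_cast hqrec (k + 1) (Nat.le_add_left 1 k) hk
    rw [hrec (k + 1) hk]
    linear_combination ih (Nat.le_of_succ_le hk) + x (k + 2) * hq

end WeightExpansion

open WeightExpansion in
theorem stmt_0_general (N : ℕ) (ℓ : ℕ → ℕ)
    (a : ℝ) (x : ℕ → ℝ) (q : ℕ → ℕ)
    (hx0 : x 0 = a) (hx1 : x 1 = 1)
    (hxrec : ∀ j ≤ N, x (j + 2) = x j - (ℓ j : ℝ) * x (j + 1))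
    (hxend : x (N + 2) = 0)
    (hq0 : q 0 = 0) (hq1 : q 1 = 1)
    (hqrec : ∀ k, 1 ≤ k → k ≤ N → q (k + 1) = ℓ k * q k + q (k - 1)) :
    (∑ j ∈ Finset.range (N + 1), (ℓ j : ℝ) * (x (j + 1)) ^ 2 = a) ∧
    (∑ j ∈ Finset.range (N + 1), (ℓ j : ℝ) * x (j + 1) = a + 1 - x (N + 1)) ∧
    x (N + 1) = 1 / (q (N + 1) : ℝ) := by
  have hqx : (q (N + 1) : ℝ) * x (N + 1) = 1 := by
    simpa [hxend, hx1] using convergentDenom_mul_weight_add hxrec hq0 hq1 hqrec N le_rfl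
  refine ⟨?_, ?_, eq_one_div_of_mul_eq_one_right hqx⟩
  · simp [sum_mul_weight_sq hxrec, hx0, hx1, hxend]
  · simp [sum_mul_weight hxrec, hx0, hx1, hxend]

/-- **Lemma 2.4 (le:ww).** Let `x j` (shifted so that Lean's `x 0` is the paper's
`x₋₁ = a` and `x (j+1)` is the paper's `x_j`) be the successive weights of the
weight expansion of `a` with multiplicities `ℓ 0, …, ℓ N`, and let `q` (shifted so
that `q 0 = q₋₁ = 0`, `q 1 = q₀ = 1`) be the convergent denominators of
`[ℓ 0; ℓ 1, …, ℓ N]`.  If all weights `x_0, …, x_N` are positive and `x_{N+1} = 0`,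
then `Σ ℓ_j x_j² = a`, `Σ ℓ_j x_j = a + 1 − x_N`, and `x_N = 1/q_N`. -/
theorem stmt_0 (N : ℕ) (ℓ : ℕ → ℕ) (hℓ : ∀ j ≤ N, 0 < ℓ j)
    (a : ℝ) (x : ℕ → ℝ) (q : ℕ → ℕ)
    (hx0 : x 0 = a) (hx1 : x 1 = 1)
    (hxrec : ∀ j ≤ N, x (j + 2) = x j - (ℓ j : ℝ) * x (j + 1))
    (hxpos : ∀ j ≤ N, 0 < x (j + 1))
    (hxend : x (N + 2) = 0)
    (hq0 : q 0 = 0) (hq1 : q 1 = 1)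
    (hqrec : ∀ k, 1 ≤ k → k ≤ N → q (k + 1) = ℓ k * q k + q (k - 1)) :
    (∑ j ∈ Finset.range (N + 1), (ℓ j : ℝ) * (x (j + 1)) ^ 2 = a) ∧
    (∑ j ∈ Finset.range (N + 1), (ℓ j : ℝ) * x (j + 1) = a + 1 - x (N + 1)) ∧
    x (N + 1) = 1 / (q (N + 1) : ℝ) :=
  stmt_0_general N ℓ a x q hx0 hx1 hxrec hxend hq0 hq1 hqrec
end

section
/- Let N ≥ 0 be an integer and let ℓ_0, …, ℓ_N be positive integers. Define integers X_0, …, X_{N+1} by the backward recursion X_{N+1} = 0, X_N = 1, X_{j−1} = X_{j+1} + ℓ_j X_j for 1 ≤ j ≤ N, and define Y_0, …, Y_{N+1} by the same backward recursion for the reversed sequence: Y_{N+1} = 0, Y_N = 1, Y_{j−1} = Y_{j+1} + ℓ_{N−j} Y_j for 1 ≤ j ≤ N. Then Σ_{j=0}^N (−1)^j ℓ_j X_j Y_{N−j} = ℓ_0 X_0 + X_1 if N is even, and Σ_{j=0}^N (−1)^j ℓ_j X_j Y_{N−j} = 0 if N is odd. -/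
/-!
With `p = ℓ₀ X₀ + X₁`, the pairing `ℓⱼ Xⱼ Y_{N-j} + X_{j+1} Y_{N-j} + Xⱼ Y_{N-j+1}` of the two
weight sequences does not depend on `j` (one recursion step on each side leaves it unchanged),
so `ℓⱼ Xⱼ Y_{N-j} = p - fⱼ - f_{j+1}` with `fⱼ = Xⱼ Y_{N+1-j}`. Since `f₀ = f_{N+1} = 0`, the
alternating sum telescopes to `p ∑_{j ≤ N} (-1)ʲ`, which is `p` or `0` according to the parity
of `N`.
-/

open Finset

theorem sum_range_neg_one_pow_mul_of_add_eq {R : Type*} [CommRing R] (a f : ℕ → R) (c : R)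
    (n : ℕ) (h : ∀ j < n, a j + f j + f (j + 1) = c) :
    ∑ j ∈ range n, (-1) ^ j * a j = (∑ j ∈ range n, (-1) ^ j) * c - f 0 + (-1) ^ n * f n := by
  induction n with
  | zero => simp
  | succ n ih =>
    rw [sum_range_succ, sum_range_succ, ih fun j hj => h j (by omega)]
    linear_combination (-1) ^ n * h n n.lt_succ_self

theorem mirror_weight_pairing_eq {R : Type*} [CommRing R] (N : ℕ) (ℓ X Y : ℕ → R)
    (hXrec : ∀ j, 1 ≤ j → j ≤ N → X (j - 1) = X (j + 1) + ℓ j * X j)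
    (hYrec : ∀ j, 1 ≤ j → j ≤ N → Y (j - 1) = Y (j + 1) + ℓ (N - j) * Y j) :
    ∀ j ≤ N, ℓ j * X j * Y (N - j) + X (j + 1) * Y (N - j) + X j * Y (N - j + 1)
      = ℓ 0 * X 0 * Y N + X 1 * Y N + X 0 * Y (N + 1) := by
  intro j
  induction j with
  | zero => simp
  | succ j ih =>
    intro hj
    have hX : X j = X (j + 2) + ℓ (j + 1) * X (j + 1) := hXrec (j + 1) (by omega) hj
    have hY : Y (N - (j + 1)) = Y (N - j + 1) + ℓ j * Y (N - j) := by
      have h := hYrec (N - j) (by omega) (by omega)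
      rwa [Nat.sub_sub_self (by omega), Nat.sub_sub] at h
    rw [hY, show N - (j + 1) + 1 = N - j by omega, ← ih (by omega), hX]
    ring

theorem stmt_4_general (N : ℕ) (ℓ : ℕ → ℕ)
    (X Y : ℕ → ℕ)
    (hXtop : X (N + 1) = 0)
    (hXrec : ∀ j, 1 ≤ j → j ≤ N → X (j - 1) = X (j + 1) + ℓ j * X j)
    (hYtop : Y (N + 1) = 0) (hYN : Y N = 1)
    (hYrec : ∀ j, 1 ≤ j → j ≤ N → Y (j - 1) = Y (j + 1) + ℓ (N - j) * Y j) :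
    (Even N →
      ∑ j ∈ Finset.range (N + 1), (-1 : ℤ) ^ j * (ℓ j : ℤ) * (X j : ℤ) * (Y (N - j) : ℤ)
        = (ℓ 0 : ℤ) * (X 0 : ℤ) + (X 1 : ℤ)) ∧
    (Odd N →
      ∑ j ∈ Finset.range (N + 1), (-1 : ℤ) ^ j * (ℓ j : ℤ) * (X j : ℤ) * (Y (N - j) : ℤ)
        = 0) := by
  have hpairing := mirror_weight_pairing_eq N (fun j => (ℓ j : ℤ)) (fun j => (X j : ℤ))
    (fun j => (Y j : ℤ)) (fun j h₁ h₂ => by exact_mod_cast hXrec j h₁ h₂)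
    (fun j h₁ h₂ => by exact_mod_cast hYrec j h₁ h₂)
  have hsum := sum_range_neg_one_pow_mul_of_add_eq (fun j => (ℓ j : ℤ) * X j * Y (N - j))
    (fun j => (X j : ℤ) * Y (N + 1 - j)) ((ℓ 0 : ℤ) * X 0 + X 1) (N + 1) fun j hj => by
      have h := hpairing j (by omega)
      simp only [hYN, hYtop, Nat.cast_one, Nat.cast_zero, mul_one, mul_zero, add_zero] at h
      rw [show N + 1 - j = N - j + 1 by omega, show N + 1 - (j + 1) = N - j by omega, ← h]
      ring
  simp only [hXtop, hYtop, Nat.sub_zero, Nat.cast_zero, mul_zero, zero_mul, sub_zero, add_zero,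
    neg_one_geom_sum, Nat.even_add_one, ← mul_assoc] at hsum
  rw [hsum]
  exact ⟨fun hN => by simp [hN], fun hN => by simp [Nat.not_even_iff_odd.mpr hN]⟩

/-- **Proposition 2.8 (prop:mirror).** Let `X` be the normalized weights of
`[ℓ_0; …, ℓ_N]` (backward recursion `X_{N+1} = 0`, `X_N = 1`,
`X_{j−1} = X_{j+1} + ℓ_j X_j`), and let `Y` be the normalized weights of the
mirror `[ℓ_N; …, ℓ_0]`.  Then `Σ_{j=0}^N (−1)^j ℓ_j X_j Y_{N−j}` equals
`ℓ_0 X_0 + X_1` (which is the numerator `p_N`) if `N` is even, and `0` if `N`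
is odd. -/
theorem stmt_4 (N : ℕ) (ℓ : ℕ → ℕ) (hℓ : ∀ j ≤ N, 0 < ℓ j)
    (X Y : ℕ → ℕ)
    (hXtop : X (N + 1) = 0) (hXN : X N = 1)
    (hXrec : ∀ j, 1 ≤ j → j ≤ N → X (j - 1) = X (j + 1) + ℓ j * X j)
    (hYtop : Y (N + 1) = 0) (hYN : Y N = 1)
    (hYrec : ∀ j, 1 ≤ j → j ≤ N → Y (j - 1) = Y (j + 1) + ℓ (N - j) * Y j) :
    (Even N →
      ∑ j ∈ Finset.range (N + 1), (-1 : ℤ) ^ j * (ℓ j : ℤ) * (X j : ℤ) * (Y (N - j) : ℤ)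
        = (ℓ 0 : ℤ) * (X 0 : ℤ) + (X 1 : ℤ)) ∧
    (Odd N →
      ∑ j ∈ Finset.range (N + 1), (-1 : ℤ) ^ j * (ℓ j : ℤ) * (X j : ℤ) * (Y (N - j) : ℤ)
        = 0) :=
  stmt_4_general N ℓ X Y hXtop hXrec hYtop hYN hYrec
end

section
/- Let N ≥ 0 be an integer, let ℓ_0, …, ℓ_N be positive integers, let a be a real number, and define x_{-1} = a, x_0 = 1, x_{j+1} = x_{j-1} − ℓ_j x_j for 0 ≤ j ≤ N; assume x_j > 0 for 0 ≤ j ≤ N and x_{N+1} = 0. Define α_0 = 1, α_1 = −ℓ_0, α_{j+1} = α_{j-1} − ℓ_j α_j for 1 ≤ j ≤ N, and β_0 = 0, β_1 = 1, β_{j+1} = β_{j-1} − ℓ_j β_j for 1 ≤ j ≤ N. Then: if N is even, Σ_{j=0}^N ℓ_j x_j α_j = a and Σ_{j=0}^N ℓ_j x_j β_j = 0; if N is odd, Σ_{j=0}^N ℓ_j x_j α_j = 0 and Σ_{j=0}^N ℓ_j x_j β_j = 1. -/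
/-!
Shift `α` and `β` by one index, putting `0` resp. `1` in front: the shifted sequences satisfy
the same three-term recurrence `u (j+2) = u j - ℓ j * u (j+1)` as the weights `x`. For two
solutions `u, w` of it the Casoratian `u (j+1) * w j - u j * w (j+1)` only alternates in sign,
and `ℓ j * u (j+1) * w (j+1)` is a telescoping difference minus that Casoratian. Since
`x (N+2) = 0`, the sums become `x 1 * w 0` minus an alternating sum of `±1` times the initial
Casoratian, whose value depends only on the parity of `N`.
-/

open Finset

namespace ThreeTermRecurrence

variable {R : Type*} [CommRing R] {N : ℕ} {q u w : ℕ → R}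

theorem casoratian_eq (hu : ∀ j ≤ N, u (j + 2) = u j - q j * u (j + 1))
    (hw : ∀ j ≤ N, w (j + 2) = w j - q j * w (j + 1)) :
    ∀ j ≤ N + 1, u (j + 1) * w j - u j * w (j + 1) = (-1) ^ j * (u 1 * w 0 - u 0 * w 1) := by
  intro j hj
  induction j with
  | zero => simp
  | succ k ih =>
    have hk : k ≤ N := by omega
    rw [hu k hk, hw k hk, pow_succ, mul_right_comm, ← ih (by omega)]
    ring

theorem sum_mul_eq (hu : ∀ j ≤ N, u (j + 2) = u j - q j * u (j + 1))
    (hw : ∀ j ≤ N, w (j + 2) = w j - q j * w (j + 1)) :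
    ∑ j ∈ range (N + 1), q j * u (j + 1) * w (j + 1) =
      u 1 * w 0 - u (N + 2) * w (N + 1) -
        (∑ j ∈ range (N + 1), (-1) ^ j) * (u 1 * w 0 - u 0 * w 1) := by
  have hterm : ∀ j ∈ range (N + 1), q j * u (j + 1) * w (j + 1) =
      (u (j + 1) * w j - u (j + 2) * w (j + 1)) - (-1) ^ j * (u 1 * w 0 - u 0 * w 1) := by
    intro j hj
    have hjN : j ≤ N := Nat.lt_succ_iff.mp (mem_range.mp hj)
    rw [← casoratian_eq hu hw j (by omega), hu j hjN]
    ring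
  rw [sum_congr rfl hterm, sum_sub_distrib, ← sum_mul,
    sum_range_sub' (fun j => u (j + 1) * w j)]

def consSeq (v : R) (c : ℕ → R) : ℕ → R
  | 0 => v
  | k + 1 => c k

theorem consSeq_recurrence {c : ℕ → R} {v : R} (h1 : c 1 = v - q 0 * c 0)
    (hc : ∀ j, 1 ≤ j → j ≤ N → c (j + 1) = c (j - 1) - q j * c j) :
    ∀ j ≤ N, consSeq v c (j + 2) = consSeq v c j - q j * consSeq v c (j + 1) := by
  rintro (_ | k) hk
  · exact h1
  · exact hc (k + 1) (by omega) hk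

theorem sum_mul_shifted_eq {x c : ℕ → R} {v : R}
    (hx : ∀ j ≤ N, x (j + 2) = x j - q j * x (j + 1)) (hxN : x (N + 2) = 0)
    (h1 : c 1 = v - q 0 * c 0)
    (hc : ∀ j, 1 ≤ j → j ≤ N → c (j + 1) = c (j - 1) - q j * c j) :
    ∑ j ∈ range (N + 1), q j * x (j + 1) * c j =
      x 1 * v - (∑ j ∈ range (N + 1), (-1) ^ j) * (x 1 * v - x 0 * c 0) := by
  simpa [hxN, consSeq] using sum_mul_eq hx (consSeq_recurrence h1 hc)

end ThreeTermRecurrence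

open ThreeTermRecurrence

theorem stmt_5_general (N : ℕ) (ℓ : ℕ → ℕ)
    (a : ℝ) (x : ℕ → ℝ) (α β : ℕ → ℤ)
    (hx0 : x 0 = a) (hx1 : x 1 = 1)
    (hxrec : ∀ j ≤ N, x (j + 2) = x j - (ℓ j : ℝ) * x (j + 1))
    (hxend : x (N + 2) = 0)
    (hα0 : α 0 = 1) (hα1 : α 1 = -(ℓ 0 : ℤ))
    (hαrec : ∀ j, 1 ≤ j → j ≤ N → α (j + 1) = α (j - 1) - (ℓ j : ℤ) * α j)
    (hβ0 : β 0 = 0) (hβ1 : β 1 = 1)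
    (hβrec : ∀ j, 1 ≤ j → j ≤ N → β (j + 1) = β (j - 1) - (ℓ j : ℤ) * β j) :
    (Even N →
      (∑ j ∈ Finset.range (N + 1), (ℓ j : ℝ) * x (j + 1) * (α j : ℝ)) = a ∧
      (∑ j ∈ Finset.range (N + 1), (ℓ j : ℝ) * x (j + 1) * (β j : ℝ)) = 0) ∧
    (Odd N →
      (∑ j ∈ Finset.range (N + 1), (ℓ j : ℝ) * x (j + 1) * (α j : ℝ)) = 0 ∧
      (∑ j ∈ Finset.range (N + 1), (ℓ j : ℝ) * x (j + 1) * (β j : ℝ)) = 1) := by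
  have hα := sum_mul_shifted_eq (c := fun j => (α j : ℝ)) (v := 0) hxrec hxend
    (by simp [hα0, hα1]) (fun j h1 h2 => by exact_mod_cast hαrec j h1 h2)
  have hβ := sum_mul_shifted_eq (c := fun j => (β j : ℝ)) (v := 1) hxrec hxend
    (by simp [hβ0, hβ1]) (fun j h1 h2 => by exact_mod_cast hβrec j h1 h2)
  simp only [hx0, hx1, hα0, hβ0, Int.cast_one, Int.cast_zero, neg_one_geom_sum,
    Nat.even_add_one] at hα hβ
  refine ⟨fun hN => ?_, fun hN => ?_⟩
  · simp only [hN, not_true_eq_false, if_false] at hα hβ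
    constructor <;> linarith
  · simp only [Nat.not_even_iff_odd.mpr hN, not_false_eq_true, if_true] at hα hβ
    constructor <;> linarith

/-- **Corollary 2.9 (cor:mirror2).** With the weight expansion `x` of `a`
(shifted: `x 0 = x₋₁ = a`, `x (j+1) = x_j`) and the coefficient sequences
`α, β` of `[ℓ_0; …, ℓ_N]`: if `N` is even then `Σ ℓ_j x_j α_j = a` and
`Σ ℓ_j x_j β_j = 0`; if `N` is odd then `Σ ℓ_j x_j α_j = 0` and
`Σ ℓ_j x_j β_j = 1`. -/
theorem stmt_5 (N : ℕ) (ℓ : ℕ → ℕ) (hℓ : ∀ j ≤ N, 0 < ℓ j)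
    (a : ℝ) (x : ℕ → ℝ) (α β : ℕ → ℤ)
    (hx0 : x 0 = a) (hx1 : x 1 = 1)
    (hxrec : ∀ j ≤ N, x (j + 2) = x j - (ℓ j : ℝ) * x (j + 1))
    (hxpos : ∀ j ≤ N, 0 < x (j + 1))
    (hxend : x (N + 2) = 0)
    (hα0 : α 0 = 1) (hα1 : α 1 = -(ℓ 0 : ℤ))
    (hαrec : ∀ j, 1 ≤ j → j ≤ N → α (j + 1) = α (j - 1) - (ℓ j : ℤ) * α j)
    (hβ0 : β 0 = 0) (hβ1 : β 1 = 1)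
    (hβrec : ∀ j, 1 ≤ j → j ≤ N → β (j + 1) = β (j - 1) - (ℓ j : ℤ) * β j) :
    (Even N →
      (∑ j ∈ Finset.range (N + 1), (ℓ j : ℝ) * x (j + 1) * (α j : ℝ)) = a ∧
      (∑ j ∈ Finset.range (N + 1), (ℓ j : ℝ) * x (j + 1) * (β j : ℝ)) = 0) ∧
    (Odd N →
      (∑ j ∈ Finset.range (N + 1), (ℓ j : ℝ) * x (j + 1) * (α j : ℝ)) = 0 ∧
      (∑ j ∈ Finset.range (N + 1), (ℓ j : ℝ) * x (j + 1) * (β j : ℝ)) = 1) :=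
  stmt_5_general N ℓ a x α β hx0 hx1 hxrec hxend hα0 hα1 hαrec hβ0 hβ1 hβrec
end

section
/- Let N ≥ 0 be an integer and let ℓ_0, …, ℓ_N be positive integers. Let η_{-1}, η_0, …, η_{N+1} be nonnegative integers satisfying η_{j+1} = η_{j-1} + ℓ_j η_j for 0 ≤ j ≤ N, with either (η_{-1}, η_0) = (0, 1) or (η_{-1}, η_0) = (1, 0). Then for every 0 ≤ k ≤ N one has ℓ_k · (Σ_{j=0}^k ℓ_j η_j²) ≤ η_{k+1}²; in particular, if ℓ_N ≥ 2 then Σ_{j=0}^N ℓ_j η_j² ≤ (1/2) η_{N+1}². -/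
/-!
The recurrence gives `ℓ_j η_j² = η_j η_{j+1} − η_{j−1} η_j`, so the sum telescopes to
`η_k η_{k+1}` (the initial condition makes `η_{−1} η_0 = 0`). Since `ℓ_k η_k ≤ η_{k+1}`,
multiplying by `ℓ_k` gives at most `η_{k+1}²`; the case `ℓ_N ≥ 2` is the instance `k = N`.
-/

open Finset

theorem add_sum_mul_sq_eq_of_rec {R : Type*} [CommSemiring R] (ℓ η : ℕ → R) (k : ℕ)
    (hrec : ∀ j ≤ k, η (j + 2) = η j + ℓ j * η (j + 1)) :
    η 0 * η 1 + ∑ j ∈ range (k + 1), ℓ j * η (j + 1) ^ 2 = η (k + 1) * η (k + 2) := by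
  induction k with
  | zero =>
    rw [sum_range_one, hrec 0 le_rfl]
    ring
  | succ k ih =>
    rw [sum_range_succ, ← add_assoc, ih fun j hj => hrec j (by omega), hrec (k + 1) le_rfl]
    ring

theorem stmt_6_general (N : ℕ) (ℓ : ℕ → ℕ)
    (η : ℕ → ℕ)
    (hinit : (η 0 = 0 ∧ η 1 = 1) ∨ (η 0 = 1 ∧ η 1 = 0))
    (hrec : ∀ j ≤ N, η (j + 2) = η j + ℓ j * η (j + 1)) :
    (∀ k ≤ N,
      ℓ k * ∑ j ∈ Finset.range (k + 1), ℓ j * (η (j + 1)) ^ 2 ≤ (η (k + 2)) ^ 2) ∧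
    (2 ≤ ℓ N →
      2 * ∑ j ∈ Finset.range (N + 1), ℓ j * (η (j + 1)) ^ 2 ≤ (η (N + 2)) ^ 2) := by
  have h01 : η 0 * η 1 = 0 := by
    rcases hinit with ⟨h, -⟩ | ⟨-, h⟩ <;> simp [h]
  have hsum : ∀ k ≤ N, ∑ j ∈ range (k + 1), ℓ j * η (j + 1) ^ 2 = η (k + 1) * η (k + 2) := by
    intro k hk
    simpa [h01] using add_sum_mul_sq_eq_of_rec ℓ η k fun j hj => hrec j (hj.trans hk)
  have hbound : ∀ k ≤ N, ℓ k * ∑ j ∈ range (k + 1), ℓ j * η (j + 1) ^ 2 ≤ η (k + 2) ^ 2 := by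
    intro k hk
    calc ℓ k * ∑ j ∈ range (k + 1), ℓ j * η (j + 1) ^ 2
        = ℓ k * η (k + 1) * η (k + 2) := by rw [hsum k hk, mul_assoc]
      _ ≤ η (k + 2) * η (k + 2) :=
          Nat.mul_le_mul_right _ (hrec k hk ▸ Nat.le_add_left _ _)
      _ = η (k + 2) ^ 2 := (sq _).symm
  exact ⟨hbound, fun h2 => (Nat.mul_le_mul_right _ h2).trans (hbound N le_rfl)⟩

/-- **Lemma 2.17 (le:est).** Let `η` (shifted: Lean's `η 0` is the paper's
`η₋₁` and `η (j+1)` is the paper's `η_j`) satisfy `η_{j+1} = η_{j−1} + ℓ_j η_j`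
for `0 ≤ j ≤ N`, with initial condition `(η₋₁, η₀) = (0,1)` or `(1,0)`.
Then for all `0 ≤ k ≤ N`, `ℓ_k · Σ_{j=0}^k ℓ_j η_j² ≤ η_{k+1}²`; in particular,
if `ℓ_N ≥ 2` then `Σ_{j=0}^N ℓ_j η_j² ≤ ½ η_{N+1}²`. -/
theorem stmt_6 (N : ℕ) (ℓ : ℕ → ℕ) (hℓ : ∀ j ≤ N, 0 < ℓ j)
    (η : ℕ → ℕ)
    (hinit : (η 0 = 0 ∧ η 1 = 1) ∨ (η 0 = 1 ∧ η 1 = 0))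
    (hrec : ∀ j ≤ N, η (j + 2) = η j + ℓ j * η (j + 1)) :
    (∀ k ≤ N,
      ℓ k * ∑ j ∈ Finset.range (k + 1), ℓ j * (η (j + 1)) ^ 2 ≤ (η (k + 2)) ^ 2) ∧
    (2 ≤ ℓ N →
      2 * ∑ j ∈ Finset.range (N + 1), ℓ j * (η (j + 1)) ^ 2 ≤ (η (N + 2)) ^ 2) :=
  stmt_6_general N ℓ η hinit hrec
end

section
/- K(a) = c_ECH(a) for every real number a > 1. -/
open scoped Classical

/-- Number of lattice points `(x, y) ∈ ℕ²` with `x + a·y ≤ A + a·B`, i.e. the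
number of lattice points in the triangle `T^a_{A,B}`. -/
noncomputable def latticeCount (a : ℝ) (A B : ℕ) : ℕ :=
  Set.ncard {p : ℕ × ℕ | (p.1 : ℝ) + a * (p.2 : ℝ) ≤ (A : ℝ) + a * (B : ℝ)}

/-- The smallest positive integer `d` with `latticeCount a A B ≤ (d+1)(d+2)/2`. -/
noncomputable def dAB (a : ℝ) (A B : ℕ) : ℕ :=
  sInf {d : ℕ | 0 < d ∧ 2 * latticeCount a A B ≤ (d + 1) * (d + 2)}

/-- `k_{A,B}(a) = (A + B·a) / d_{A,B}(a)`. -/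
noncomputable def kAB (a : ℝ) (A B : ℕ) : ℝ :=
  ((A : ℝ) + (B : ℝ) * a) / (dAB a A B : ℝ)

/-- `K(a)` for irrational `a`: the supremum of `k_{A,B}(a)` over all `A, B ≥ 0`. -/
noncomputable def Kirr (a : ℝ) : ℝ :=
  ⨆ p : ℕ × ℕ, kAB a p.1 p.2

/-- The capacity function `K`: for irrational `a` it is `Kirr a`; for rational
`a` it is the supremum of `Kirr z` over irrational `z` with `1 < z < a`. -/
noncomputable def Kcap (a : ℝ) : ℝ :=
  if Irrational a then Kirr a
  else sSup {x : ℝ | ∃ z : ℝ, Irrational z ∧ 1 < z ∧ z < a ∧ x = Kirr z}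

/-- The `k`-th term (indexed from `0`) of the nondecreasing sequence `N(a,b)`
listing, with multiplicities, all numbers `m·a + n·b` with `m, n ∈ ℕ`:
it is the infimum of all `t` such that at least `k+1` pairs `(m,n)` satisfy
`m·a + n·b ≤ t`. -/
noncomputable def Nseq (a b : ℝ) (k : ℕ) : ℝ :=
  sInf {t : ℝ | k + 1 ≤ Set.ncard {p : ℕ × ℕ | (p.1 : ℝ) * a + (p.2 : ℝ) * b ≤ t}}

/-- `c_ECH(a) = inf {μ > 0 | N(1,a) ≼ N(μ,μ)}`. -/
noncomputable def cECH (a : ℝ) : ℝ :=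
  sInf {μ : ℝ | 0 < μ ∧ ∀ k : ℕ, Nseq 1 a k ≤ Nseq μ μ k}

/-!
The sequence `N(a,b)` lists the weights `m a + n b` in order, and its `k`-th term is characterised
by `N_k(a,b) ≤ t ↔ #{(m,n) : m a + n b ≤ t} ≥ k + 1`: the counting function is a step function
that is continuous from the right and jumps exactly at weights. Since `N_k(μ,μ) = μ N_k(1,1)` and
`N_k(1,1)` is the least `d` with `(d+1)(d+2)/2 ≥ k+1`, `c_ECH(a) = sup_k N_k(1,a) / N_k(1,1)`.

If `L` lattice points lie in the triangle `T^a_{A,B}`, then `A + B a = N_{L-1}(1,a)` and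
`d_{A,B}(a) = N_{L-1}(1,1)`, so `k_{A,B}(a)` is the `(L-1)`-st term of the same ratio sequence.
For irrational `a` the weights are pairwise distinct, so every `L ≥ 1` occurs and `K(a) = c_ECH(a)`.
For rational `a`, `N_k(1,z) ≤ N_k(1,a) ≤ (a/z) N_k(1,z)` when `z ≤ a`, and letting irrational
`z` increase to `a` gives the claim.
-/

open Filter Topology

namespace ECH

variable {a b μ : ℝ}

def weight (a b : ℝ) (p : ℕ × ℕ) : ℝ := p.1 * a + p.2 * b

def pairsBelow (a b t : ℝ) : Set (ℕ × ℕ) := {p | weight a b p ≤ t}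

lemma weight_nonneg (ha : 0 ≤ a) (hb : 0 ≤ b) (p : ℕ × ℕ) : 0 ≤ weight a b p := by
  unfold weight; positivity

lemma weight_mul_mul (μ : ℝ) (p : ℕ × ℕ) : weight (μ * a) (μ * b) p = μ * weight a b p := by
  unfold weight; ring

lemma pairsBelow_mono (a b : ℝ) : Monotone (pairsBelow a b) :=
  fun _ _ hst _ hp => le_trans hp hst

lemma pairsBelow_mul_mul (hμ : 0 < μ) (t : ℝ) :
    pairsBelow (μ * a) (μ * b) (μ * t) = pairsBelow a b t := by
  ext p
  simp only [pairsBelow, Set.mem_ofPred_eq, weight_mul_mul, mul_le_mul_iff_right₀ hμ]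

lemma finite_pairsBelow (ha : 0 < a) (hb : 0 < b) (t : ℝ) : (pairsBelow a b t).Finite := by
  refine (Set.finite_Iic (⌊t / a⌋₊, ⌊t / b⌋₊)).subset fun p (hp : weight a b p ≤ t) => ?_
  have h1 : (p.1 : ℝ) * a ≤ t := (le_add_of_nonneg_right (by positivity)).trans hp
  have h2 : (p.2 : ℝ) * b ≤ t := (le_add_of_nonneg_left (by positivity)).trans hp
  exact Prod.mk_le_mk.2 ⟨Nat.le_floor ((le_div_iff₀ ha).2 h1), Nat.le_floor ((le_div_iff₀ hb).2 h2)⟩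

lemma ncard_pairsBelow_mono (ha : 0 < a) (hb : 0 < b) :
    Monotone fun t => (pairsBelow a b t).ncard :=
  fun _ t hst => Set.ncard_le_ncard (pairsBelow_mono a b hst) (finite_pairsBelow ha hb t)

lemma pairsBelow_zero (ha : 0 < a) (hb : 0 < b) : pairsBelow a b 0 = {0} := by
  ext ⟨m, n⟩
  simp only [pairsBelow, weight, Set.mem_ofPred_eq, Set.mem_singleton_iff, Prod.mk_eq_zero]
  constructor
  · intro h
    have hm : (m : ℝ) * a = 0 := by
      nlinarith [mul_nonneg (Nat.cast_nonneg (α := ℝ) m) ha.le,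
        mul_nonneg (Nat.cast_nonneg (α := ℝ) n) hb.le]
    have hn : (n : ℝ) * b = 0 := by
      nlinarith [mul_nonneg (Nat.cast_nonneg (α := ℝ) m) ha.le,
        mul_nonneg (Nat.cast_nonneg (α := ℝ) n) hb.le]
    simpa [ha.ne', hb.ne'] using And.intro hm hn
  · rintro ⟨rfl, rfl⟩
    simp

lemma eventually_pairsBelow_eq_right (ha : 0 < a) (hb : 0 < b) (t : ℝ) :
    ∀ᶠ u in 𝓝[>] t, pairsBelow a b u = pairsBelow a b t := by
  have hgap : ∀ᶠ u in 𝓝[>] t, ∀ p ∈ pairsBelow a b (t + 1),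
      t < weight a b p → u < weight a b p := by
    refine (finite_pairsBelow ha hb (t + 1)).eventually_all.2 fun p _ => ?_
    by_cases h : t < weight a b p
    · filter_upwards [nhdsWithin_le_nhds (Iio_mem_nhds h)] with u hu _ using hu
    · exact .of_forall fun _ h' => absurd h' h
  filter_upwards [hgap, nhdsWithin_le_nhds (Iio_mem_nhds (lt_add_one t)), self_mem_nhdsWithin]
    with u hu hut htu
  refine subset_antisymm (fun p (hp : weight a b p ≤ u) => show weight a b p ≤ t from not_lt.1 fun htp => ?_)
    (pairsBelow_mono a b htu.le)
  exact (hu p (le_trans hp hut.le) htp).not_ge hp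

lemma eventually_pairsBelow_eq_left (ha : 0 < a) (hb : 0 < b) (t : ℝ) :
    ∀ᶠ s in 𝓝[<] t, pairsBelow a b s = {p | weight a b p < t} := by
  have hgap : ∀ᶠ s in 𝓝[<] t, ∀ p ∈ pairsBelow a b t, weight a b p < t → weight a b p < s := by
    refine (finite_pairsBelow ha hb t).eventually_all.2 fun p _ => ?_
    by_cases h : weight a b p < t
    · filter_upwards [nhdsWithin_le_nhds (Ioi_mem_nhds h)] with s hs _ using hs
    · exact .of_forall fun _ h' => absurd h' h
  filter_upwards [hgap, self_mem_nhdsWithin] with s hs hst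
  ext p
  exact ⟨fun hp => show weight a b p < t from lt_of_le_of_lt hp hst, fun (hp : weight a b p < t) => (hs p hp.le hp).le⟩

lemma exists_le_ncard_pairsBelow (ha : 0 < a) (hb : 0 < b) (k : ℕ) :
    ∃ t, k + 1 ≤ (pairsBelow a b t).ncard := by
  have hinj : Function.Injective fun i : ℕ => ((i, 0) : ℕ × ℕ) := fun i j h => (Prod.mk.inj h).1
  refine ⟨k * a, ?_⟩
  calc k + 1 = (((Finset.range (k + 1)).image fun i => ((i, 0) : ℕ × ℕ)) : Set (ℕ × ℕ)).ncard := by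
        rw [Set.ncard_coe_finset, Finset.card_image_of_injective _ hinj, Finset.card_range]
    _ ≤ (pairsBelow a b (k * a)).ncard := by
      refine Set.ncard_le_ncard (fun p hp => ?_) (finite_pairsBelow ha hb _)
      obtain ⟨i, hi, rfl⟩ := Finset.mem_image.1 hp
      have hik : (i : ℝ) ≤ k := by exact_mod_cast Nat.lt_succ_iff.1 (Finset.mem_range.1 hi)
      show (i : ℝ) * a + ((0 : ℕ) : ℝ) * b ≤ k * a
      simpa using mul_le_mul_of_nonneg_right hik ha.le

lemma bddBelow_setOf_le_ncard_pairsBelow (ha : 0 < a) (hb : 0 < b) (k : ℕ) :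
    BddBelow {t | k + 1 ≤ (pairsBelow a b t).ncard} := by
  refine ⟨0, fun t (ht : k + 1 ≤ _) => ?_⟩
  obtain ⟨p, hp⟩ := Set.nonempty_of_ncard_ne_zero (by omega : (pairsBelow a b t).ncard ≠ 0)
  exact (weight_nonneg ha.le hb.le p).trans hp

lemma le_ncard_pairsBelow_Nseq (ha : 0 < a) (hb : 0 < b) (k : ℕ) :
    k + 1 ≤ (pairsBelow a b (Nseq a b k)).ncard := by
  obtain ⟨u, hu, hcu⟩ :=
    ((eventually_pairsBelow_eq_right ha hb (Nseq a b k)).and self_mem_nhdsWithin).exists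
  obtain ⟨t, ht, htu⟩ := exists_lt_of_csInf_lt (exists_le_ncard_pairsBelow ha hb k) hcu
  have hct : Nseq a b k ≤ t := csInf_le (bddBelow_setOf_le_ncard_pairsBelow ha hb k) ht
  rw [← hu]
  exact le_trans ht (ncard_pairsBelow_mono ha hb htu.le)

lemma Nseq_le_iff (ha : 0 < a) (hb : 0 < b) {k : ℕ} {t : ℝ} :
    Nseq a b k ≤ t ↔ k + 1 ≤ (pairsBelow a b t).ncard :=
  ⟨fun h => (le_ncard_pairsBelow_Nseq ha hb k).trans (ncard_pairsBelow_mono ha hb h),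
    fun h => csInf_le (bddBelow_setOf_le_ncard_pairsBelow ha hb k) h⟩

lemma lt_Nseq_iff (ha : 0 < a) (hb : 0 < b) {k : ℕ} {t : ℝ} :
    t < Nseq a b k ↔ (pairsBelow a b t).ncard ≤ k := by
  rw [← not_le, Nseq_le_iff ha hb]
  omega

lemma exists_weight_eq_Nseq (ha : 0 < a) (hb : 0 < b) (k : ℕ) :
    ∃ p, weight a b p = Nseq a b k := by
  by_contra! hne
  obtain ⟨s, hs, hsc⟩ :=
    ((eventually_pairsBelow_eq_left ha hb (Nseq a b k)).and self_mem_nhdsWithin).exists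
  have hs' : pairsBelow a b s = pairsBelow a b (Nseq a b k) :=
    hs.trans (Set.ext fun p => lt_iff_le_and_ne.trans (and_iff_left (hne p)))
  have := (lt_Nseq_iff ha hb).1 hsc
  have := le_ncard_pairsBelow_Nseq ha hb k
  rw [hs'] at *
  omega

lemma Nseq_nonneg (ha : 0 < a) (hb : 0 < b) (k : ℕ) : 0 ≤ Nseq a b k := by
  obtain ⟨p, hp⟩ := exists_weight_eq_Nseq ha hb k
  exact hp ▸ weight_nonneg ha.le hb.le p

lemma Nseq_pos_iff (ha : 0 < a) (hb : 0 < b) {k : ℕ} : 0 < Nseq a b k ↔ k ≠ 0 := by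
  rw [← not_le, Nseq_le_iff ha hb, pairsBelow_zero ha hb, Set.ncard_singleton]
  omega

lemma Nseq_zero (ha : 0 < a) (hb : 0 < b) : Nseq a b 0 = 0 :=
  le_antisymm (not_lt.1 fun h => (Nseq_pos_iff ha hb).1 h rfl) (Nseq_nonneg ha hb 0)

lemma Nseq_ncard_pairsBelow_weight_sub_one (ha : 0 < a) (hb : 0 < b) (p : ℕ × ℕ) :
    Nseq a b ((pairsBelow a b (weight a b p)).ncard - 1) = weight a b p := by
  set S := pairsBelow a b (weight a b p)
  have hpS : p ∈ S := le_refl (weight a b p)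
  have hS : 0 < S.ncard := (Set.ncard_pos (finite_pairsBelow ha hb _)).2 ⟨p, hpS⟩
  refine le_antisymm ((Nseq_le_iff ha hb).2 (Nat.sub_add_cancel hS).le) (not_lt.1 fun hlt => ?_)
  have hsub : pairsBelow a b (Nseq a b (S.ncard - 1)) ⊆ S \ {p} := fun q hq =>
    ⟨le_trans hq hlt.le, fun hqp => (Set.mem_singleton_iff.1 hqp ▸ hq).not_gt hlt⟩
  have := Set.ncard_le_ncard hsub (finite_pairsBelow ha hb _).sdiff
  rw [Set.ncard_sdiff_singleton_of_mem hpS] at this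
  have := le_ncard_pairsBelow_Nseq ha hb (S.ncard - 1)
  omega

lemma ncard_pairsBelow_Nseq (ha : 0 < a) (hb : 0 < b) (hinj : Function.Injective (weight a b))
    (k : ℕ) : (pairsBelow a b (Nseq a b k)).ncard = k + 1 := by
  obtain ⟨p, hp⟩ := exists_weight_eq_Nseq ha hb k
  obtain ⟨s, hs, hsc⟩ :=
    ((eventually_pairsBelow_eq_left ha hb (Nseq a b k)).and self_mem_nhdsWithin).exists
  have hsplit : pairsBelow a b (Nseq a b k) = insert p (pairsBelow a b s) := by
    rw [hs, ← hp]
    ext q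
    simp only [pairsBelow, Set.mem_ofPred_eq, Set.mem_insert_iff, le_iff_lt_or_eq, hinj.eq_iff,
      or_comm]
  refine le_antisymm ?_ (le_ncard_pairsBelow_Nseq ha hb k)
  rw [hsplit]
  have := (lt_Nseq_iff ha hb).1 hsc
  exact (Set.ncard_insert_le _ _).trans (by omega)

lemma Nseq_mono {a' b' : ℝ} (ha : 0 < a) (hb : 0 < b) (haa' : a ≤ a') (hbb' : b ≤ b') (k : ℕ) :
    Nseq a b k ≤ Nseq a' b' k := by
  rw [Nseq_le_iff ha hb]
  refine (le_ncard_pairsBelow_Nseq (ha.trans_le haa') (hb.trans_le hbb') k).trans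
    (Set.ncard_le_ncard (fun p (hp : weight a' b' p ≤ _) => le_trans ?_ hp)
      (finite_pairsBelow ha hb _))
  unfold weight
  gcongr

lemma Nseq_mul_mul (ha : 0 < a) (hb : 0 < b) (hμ : 0 < μ) (k : ℕ) :
    Nseq (μ * a) (μ * b) k = μ * Nseq a b k := by
  have ha' : 0 < μ * a := mul_pos hμ ha
  have hb' : 0 < μ * b := mul_pos hμ hb
  refine le_antisymm ((Nseq_le_iff ha' hb').2 ?_) ?_
  · rw [pairsBelow_mul_mul hμ]
    exact le_ncard_pairsBelow_Nseq ha hb k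
  · rw [← le_div_iff₀' hμ, Nseq_le_iff ha hb, ← pairsBelow_mul_mul hμ, mul_div_cancel₀ _ hμ.ne']
    exact le_ncard_pairsBelow_Nseq ha' hb' k

lemma two_mul_ncard_add_le (d : ℕ) :
    2 * {p : ℕ × ℕ | p.1 + p.2 ≤ d}.ncard = (d + 1) * (d + 2) := by
  have hset : {p : ℕ × ℕ | p.1 + p.2 ≤ d} = ↑((Finset.range (d + 1)).biUnion Finset.HasAntidiagonal.antidiagonal) := by
    ext p
    simp
  have hdisj : (↑(Finset.range (d + 1)) : Set ℕ).PairwiseDisjoint Finset.HasAntidiagonal.antidiagonal :=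
    fun i _ j _ hij => Finset.disjoint_left.2 fun p hi hj =>
      hij ((Finset.HasAntidiagonal.mem_antidiagonal.1 hi).symm.trans
        (Finset.HasAntidiagonal.mem_antidiagonal.1 hj))
  rw [hset, Set.ncard_coe_finset, Finset.card_biUnion hdisj]
  simp only [Finset.Nat.card_antidiagonal]
  clear hset hdisj
  induction d with
  | zero => simp
  | succ d ih => rw [Finset.sum_range_succ, mul_add, ih]; ring

lemma pairsBelow_one_one_natCast (d : ℕ) : pairsBelow 1 1 d = {p | p.1 + p.2 ≤ d} := by
  ext p
  simp only [pairsBelow, weight, Set.mem_ofPred_eq, mul_one]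
  norm_cast

lemma Nseq_one_one_le_natCast_iff {k d : ℕ} :
    Nseq 1 1 k ≤ d ↔ 2 * (k + 1) ≤ (d + 1) * (d + 2) := by
  rw [Nseq_le_iff one_pos one_pos, pairsBelow_one_one_natCast, ← two_mul_ncard_add_le]
  omega

lemma exists_Nseq_one_one_eq_natCast (k : ℕ) : ∃ n : ℕ, Nseq 1 1 k = n := by
  obtain ⟨p, hp⟩ := exists_weight_eq_Nseq one_pos one_pos k
  exact ⟨p.1 + p.2, by rw [← hp, weight]; push_cast; ring⟩

lemma natCast_sInf_eq_Nseq_one_one {L : ℕ} (hL : 2 ≤ L) :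
    ((sInf {d : ℕ | 0 < d ∧ 2 * L ≤ (d + 1) * (d + 2)} : ℕ) : ℝ) = Nseq 1 1 (L - 1) := by
  obtain ⟨n, hn⟩ := exists_Nseq_one_one_eq_natCast (L - 1)
  have hset : {d : ℕ | 0 < d ∧ 2 * L ≤ (d + 1) * (d + 2)} = Set.Ici n := by
    ext d
    rw [Set.mem_Ici, ← Nat.cast_le (α := ℝ), ← hn, Nseq_one_one_le_natCast_iff,
      Nat.sub_add_cancel (by omega), Set.mem_ofPred_eq]
    refine ⟨And.right, fun h => ⟨Nat.pos_of_ne_zero ?_, h⟩⟩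
    rintro rfl
    omega
  rw [hset, csInf_Ici, hn]

-- At `k = 0` both terms vanish, and the ratio is `0 / 0 = 0`.
noncomputable def ratio (a : ℝ) (k : ℕ) : ℝ := Nseq 1 a k / Nseq 1 1 k

lemma ratio_pos (ha : 0 < a) {k : ℕ} (hk : k ≠ 0) : 0 < ratio a k :=
  div_pos ((Nseq_pos_iff one_pos ha).2 hk) ((Nseq_pos_iff one_pos one_pos).2 hk)

lemma ratio_le_max (ha : 0 < a) (k : ℕ) : ratio a k ≤ max 1 a := by
  have hc : 0 < max 1 a := lt_max_of_lt_left one_pos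
  refine div_le_of_le_mul₀ (Nseq_nonneg one_pos one_pos k) hc.le ?_
  calc Nseq 1 a k ≤ Nseq (max 1 a * 1) (max 1 a * 1) k := Nseq_mono one_pos ha (by simp) (by simp) k
    _ = max 1 a * Nseq 1 1 k := Nseq_mul_mul one_pos one_pos hc k

lemma bddAbove_range_ratio (ha : 0 < a) : BddAbove (Set.range (ratio a)) :=
  ⟨max 1 a, Set.forall_mem_range.2 (ratio_le_max ha)⟩

lemma ratio_mono {z : ℝ} (hz : 0 < z) (hza : z ≤ a) (k : ℕ) : ratio z k ≤ ratio a k :=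
  div_le_div_of_nonneg_right (Nseq_mono one_pos hz le_rfl hza k) (Nseq_nonneg one_pos one_pos k)

lemma ratio_le_div_mul_ratio {z : ℝ} (hz : 0 < z) (hza : z ≤ a) (k : ℕ) :
    ratio a k ≤ a / z * ratio z k := by
  have hc : 1 ≤ a / z := (one_le_div hz).2 hza
  rw [ratio, ratio, ← mul_div_assoc]
  refine div_le_div_of_nonneg_right ?_ (Nseq_nonneg one_pos one_pos k)
  calc Nseq 1 a k ≤ Nseq (a / z * 1) (a / z * z) k :=
        Nseq_mono one_pos (hz.trans_le hza) (by simpa) (div_mul_cancel₀ a hz.ne').ge k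
    _ = a / z * Nseq 1 z k := Nseq_mul_mul one_pos hz (by positivity) k

lemma forall_Nseq_le_iff_ratio_le (ha : 0 < a) (hμ : 0 < μ) :
    (∀ k, Nseq 1 a k ≤ Nseq μ μ k) ↔ ∀ k, ratio a k ≤ μ := by
  refine forall_congr' fun k => ?_
  rw [show Nseq μ μ k = μ * Nseq 1 1 k by simpa using Nseq_mul_mul one_pos one_pos hμ k]
  rcases eq_or_ne k 0 with rfl | hk
  · simp [ratio, Nseq_zero one_pos ha, Nseq_zero one_pos one_pos, hμ.le]
  · rw [ratio, div_le_iff₀ ((Nseq_pos_iff one_pos one_pos).2 hk)]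

lemma cECH_eq_iSup_ratio (ha : 0 < a) : cECH a = ⨆ k, ratio a k := by
  have hbdd := bddAbove_range_ratio ha
  have hpos : 0 < ⨆ k, ratio a k := (ratio_pos ha one_ne_zero).trans_le (le_ciSup hbdd 1)
  have hset : {μ : ℝ | 0 < μ ∧ ∀ k, Nseq 1 a k ≤ Nseq μ μ k} = Set.Ici (⨆ k, ratio a k) := by
    ext μ
    simp only [Set.mem_ofPred_eq, Set.mem_Ici]
    constructor
    · rintro ⟨hμ, h⟩
      exact ciSup_le ((forall_Nseq_le_iff_ratio_le ha hμ).1 h)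
    · intro h
      have hμ := hpos.trans_le h
      exact ⟨hμ, (forall_Nseq_le_iff_ratio_le ha hμ).2 fun k => (le_ciSup hbdd k).trans h⟩
  rw [cECH, hset, csInf_Ici]

lemma latticeCount_eq_ncard_pairsBelow (a : ℝ) (A B : ℕ) :
    latticeCount a A B = (pairsBelow 1 a (weight 1 a (A, B))).ncard := by
  simp only [latticeCount, pairsBelow, weight, mul_one, mul_comm a]

lemma kAB_eq_ratio (ha : 0 < a) (A B : ℕ) : kAB a A B = ratio a (latticeCount a A B - 1) := by
  have hnum : (A : ℝ) + B * a = Nseq 1 a (latticeCount a A B - 1) := by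
    rw [latticeCount_eq_ncard_pairsBelow, Nseq_ncard_pairsBelow_weight_sub_one one_pos ha, weight]
    simp
  rw [kAB, ratio, hnum]
  rcases lt_or_ge (latticeCount a A B) 2 with hL | hL
  · rw [show latticeCount a A B - 1 = 0 by omega, Nseq_zero one_pos ha, zero_div, zero_div]
  · rw [dAB, natCast_sInf_eq_Nseq_one_one hL]

lemma injective_weight_one (ha : Irrational a) : Function.Injective (weight 1 a) := by
  rintro ⟨m, n⟩ ⟨m', n'⟩ h
  simp only [weight, mul_one] at h
  obtain rfl : n = n' := by
    by_contra hnn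
    apply Int.not_irrational (m' - m)
    have : ((n - n' : ℤ) : ℝ) * a = ((m' - m : ℤ) : ℝ) := by push_cast; linarith
    exact this ▸ ha.intCast_mul (by omega)
  have : m = m' := by exact_mod_cast add_right_cancel h
  rw [this]

lemma surjective_latticeCount_sub_one (ha : 0 < a) (hirr : Irrational a) :
    Function.Surjective fun p : ℕ × ℕ => latticeCount a p.1 p.2 - 1 := fun k => by
  obtain ⟨p, hp⟩ := exists_weight_eq_Nseq one_pos ha k
  refine ⟨p, ?_⟩
  simp only [latticeCount_eq_ncard_pairsBelow, hp,
    ncard_pairsBelow_Nseq one_pos ha (injective_weight_one hirr), Nat.add_sub_cancel]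

lemma Kirr_eq_iSup_ratio (ha : 0 < a) (hirr : Irrational a) : Kirr a = ⨆ k, ratio a k := by
  simp only [Kirr, kAB_eq_ratio ha]
  exact (surjective_latticeCount_sub_one ha hirr).iSup_comp (ratio a)

lemma sSup_Kirr_eq_iSup_ratio (ha : 1 < a) :
    sSup {x : ℝ | ∃ z : ℝ, Irrational z ∧ 1 < z ∧ z < a ∧ x = Kirr z} = ⨆ k, ratio a k := by
  set S := {x : ℝ | ∃ z : ℝ, Irrational z ∧ 1 < z ∧ z < a ∧ x = Kirr z}
  have hle : ∀ x ∈ S, x ≤ ⨆ k, ratio a k := by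
    rintro _ ⟨z, hz, h1, hza, rfl⟩
    rw [Kirr_eq_iSup_ratio (one_pos.trans h1) hz]
    exact ciSup_mono (bddAbove_range_ratio (one_pos.trans ha))
      fun k => ratio_mono (one_pos.trans h1) hza.le k
  obtain ⟨u, -, hu, hlim⟩ := dense_irrational.exists_seq_strictMono_tendsto_of_lt ha
  have hmem : ∀ n, Kirr (u n) ∈ S := fun n => ⟨u n, (hu n).2, (hu n).1.1, (hu n).1.2, rfl⟩
  refine le_antisymm (csSup_le ⟨_, hmem 0⟩ hle) (ciSup_le fun k => ?_)
  have hlim' : Tendsto (fun n => a / u n * sSup S) atTop (𝓝 (sSup S)) := by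
    simpa [div_self (by positivity : a ≠ 0)] using
      ((tendsto_const_nhds (x := a)).div hlim (by positivity)).mul_const (sSup S)
  refine ge_of_tendsto' hlim' fun n => ?_
  obtain ⟨⟨h1, hua⟩, hirr⟩ := hu n
  have hu0 : 0 < u n := one_pos.trans h1
  calc ratio a k ≤ a / u n * ratio (u n) k := ratio_le_div_mul_ratio hu0 hua.le k
    _ ≤ a / u n * sSup S := by
      gcongr
      calc ratio (u n) k ≤ Kirr (u n) := by
            rw [Kirr_eq_iSup_ratio hu0 hirr]
            exact le_ciSup (bddAbove_range_ratio hu0) k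
        _ ≤ sSup S := le_csSup ⟨_, hle⟩ (hmem n)

end ECH

/-- **Lemma 2.21 (lem:ECH).** `K(a) = c_ECH(a)` for all `a > 1`. -/
theorem stmt_7 (a : ℝ) (ha : 1 < a) : Kcap a = cECH a := by
  rw [ECH.cECH_eq_iSup_ratio (one_pos.trans ha), Kcap]
  split_ifs with hirr
  · exact ECH.Kirr_eq_iSup_ratio (one_pos.trans ha) hirr
  · exact ECH.sSup_Kirr_eq_iSup_ratio ha
end

section
/- For every integer n ≥ 1, K(g_{n+2}/g_n) ≥ g_{n+2}/g_{n+1}. (In the paper's notation: K(b_n) ≥ √(a_{n+1}), where b_n = g_{n+2}/g_n and a_{n+1} = (g_{n+2}/g_{n+1})².) -/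
open scoped Classical

/-- The odd-index Fibonacci numbers `g n = f_{2n-1}`:
`g 1 = 1`, `g 2 = 2`, `g 3 = 5`, `g 4 = 13`, … -/
def g (n : ℕ) : ℕ := Nat.fib (2 * n - 1)

/-!
With `p = g n`, `q = g (n + 1)`, `G = g (n + 2)` we have `p + G = 3 q` and `p G = q² + 1`, hence
`(G + 1)(p + 1) = (q + 1)(q + 2)`, and `p, G` are coprime Fibonacci numbers. For irrational `z`
slightly below `G / p` (within `1 / p²`), the lattice points with `x + z y ≤ z p` are `(0, p)`
together with the points of `[0, G] × [0, p]` strictly below the line through `(0, p)` and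
`(G, 0)`; reflecting the rectangle through its centre and using coprimality, there are
`(G + 1)(p + 1) / 2` of them. So `d_{0,p}(z) = q` and `k_{0,p}(z) = p z / q`, which tends to
`G / q` as `z ↑ G / p`. All suprema involved are finite because `k_{A,B}(z) < 1 + z`.
-/

open Finset

lemma finite_setOf_add_mul_le {a : ℝ} (ha : 0 < a) (N : ℝ) :
    {v : ℕ × ℕ | (v.1 : ℝ) + a * v.2 ≤ N}.Finite := by
  refine (Set.finite_Iic (⌊N⌋₊, ⌊N / a⌋₊)).subset ?_
  rintro ⟨x, y⟩ (h : (x : ℝ) + a * y ≤ N)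
  have hy : (0 : ℝ) ≤ a * y := by positivity
  refine Prod.mk_le_mk.2 ⟨Nat.le_floor (by linarith), Nat.le_floor ?_⟩
  rw [le_div_iff₀ ha]
  linarith [Nat.cast_nonneg (α := ℝ) x]

lemma dAB_spec (a : ℝ) (A B : ℕ) :
    0 < dAB a A B ∧ 2 * latticeCount a A B ≤ (dAB a A B + 1) * (dAB a A B + 2) :=
  Nat.sInf_mem (s := {d | 0 < d ∧ 2 * latticeCount a A B ≤ (d + 1) * (d + 2)})
    ⟨2 * latticeCount a A B + 1, by omega, by nlinarith⟩

lemma dAB_eq_of_two_mul_latticeCount_eq {a : ℝ} {A B q : ℕ} (hq : 0 < q)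
    (h : 2 * latticeCount a A B = (q + 1) * (q + 2)) : dAB a A B = q := by
  refine le_antisymm (Nat.sInf_le ⟨hq, h.le⟩) ?_
  have hd := (dAB_spec a A B).2
  rw [h] at hd
  by_contra! hlt
  nlinarith

/-- The `(d+1) × (d+1)` grid lies under the line once `A + B a ≥ (1 + a) d`, and it has more than
`(d+1)(d+2)/2` points. -/
lemma kAB_lt_one_add {a : ℝ} (ha : 0 < a) (A B : ℕ) : kAB a A B < 1 + a := by
  obtain ⟨hd, hcount⟩ := dAB_spec a A B
  set d := dAB a A B
  rw [kAB, div_lt_iff₀ (by exact_mod_cast hd)]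
  by_contra! h
  have hgrid : ((range (d + 1) ×ˢ range (d + 1) : Finset (ℕ × ℕ)) : Set (ℕ × ℕ)) ⊆
      {v | (v.1 : ℝ) + a * v.2 ≤ A + a * B} := by
    rintro ⟨x, y⟩ hv
    simp only [coe_product, coe_range, Set.mem_prod, Set.mem_Iio, Nat.lt_succ_iff] at hv
    have hx : (x : ℝ) ≤ d := by exact_mod_cast hv.1
    have hy : (y : ℝ) ≤ d := by exact_mod_cast hv.2
    show (x : ℝ) + a * y ≤ A + a * B
    nlinarith
  have hle := Set.ncard_le_ncard hgrid (finite_setOf_add_mul_le ha _)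
  rw [Set.ncard_coe_finset, card_product, card_range] at hle
  have : 2 * ((d + 1) * (d + 1)) ≤ (d + 1) * (d + 2) := (Nat.mul_le_mul_left 2 hle).trans hcount
  nlinarith

lemma Kirr_le_one_add {a : ℝ} (ha : 0 < a) : Kirr a ≤ 1 + a :=
  ciSup_le fun v => (kAB_lt_one_add ha v.1 v.2).le

lemma kAB_le_Kirr {a : ℝ} (ha : 0 < a) (A B : ℕ) : kAB a A B ≤ Kirr a :=
  le_ciSup (f := fun v : ℕ × ℕ => kAB a v.1 v.2)
    ⟨1 + a, by rintro _ ⟨v, rfl⟩; exact (kAB_lt_one_add ha v.1 v.2).le⟩ (A, B)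

section Diagonal

variable (p G : ℕ)

/-- The lattice points of `[0, G] × [0, p]`. -/
def rectangle : Finset (ℕ × ℕ) := range (G + 1) ×ˢ range (p + 1)

def belowDiagonal : Finset (ℕ × ℕ) := {v ∈ rectangle p G | p * v.1 + G * v.2 < p * G}

variable {p G}

lemma mem_belowDiagonal {v : ℕ × ℕ} :
    v ∈ belowDiagonal p G ↔ p * v.1 + G * v.2 < p * G := by
  refine ⟨fun h => (mem_filter.1 h).2, fun h => mem_filter.2 ⟨?_, h⟩⟩
  have hx : v.1 < G := Nat.lt_of_mul_lt_mul_left (a := p) (by omega)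
  have hy : v.2 < p := Nat.lt_of_mul_lt_mul_left (a := G) (by rw [mul_comm G p]; omega)
  simp only [rectangle, mem_product, mem_range]
  omega

/-- The point reflection `(x, y) ↦ (G - x, p - y)` of the rectangle exchanges the two sides of
the diagonal. -/
lemma card_belowDiagonal_eq_card_filter_gt :
    #(belowDiagonal p G) = #{v ∈ rectangle p G | p * G < p * v.1 + G * v.2} := by
  have hsum : ∀ v ∈ rectangle p G,
      p * (G - v.1) + G * (p - v.2) + (p * v.1 + G * v.2) = 2 * (p * G) := by
    rintro ⟨x, y⟩ hv
    simp only [rectangle, mem_product, mem_range] at hv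
    obtain ⟨x', rfl⟩ := Nat.exists_eq_add_of_le (Nat.lt_succ_iff.1 hv.1)
    obtain ⟨y', rfl⟩ := Nat.exists_eq_add_of_le (Nat.lt_succ_iff.1 hv.2)
    simp only [Nat.add_sub_cancel_left]
    ring
  have hmem : ∀ v ∈ rectangle p G, (G - v.1, p - v.2) ∈ rectangle p G := by
    simp only [rectangle, mem_product, mem_range]
    omega
  refine card_nbij' (fun v => (G - v.1, p - v.2)) (fun v => (G - v.1, p - v.2)) ?_ ?_ ?_ ?_
  iterate 2
    intro v hv
    simp only [belowDiagonal, coe_filter, Set.mem_ofPred_eq] at hv ⊢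
    have := hsum v hv.1
    exact ⟨hmem v hv.1, by omega⟩
  all_goals
    intro v hv
    simp only [belowDiagonal, coe_filter, rectangle, mem_product, mem_range,
      Set.mem_ofPred_eq] at hv
    ext <;> simp only <;> omega

lemma filter_diagonal_eq_of_coprime (hG : 0 < G) (hcop : p.Coprime G) :
    {v ∈ rectangle p G | p * v.1 + G * v.2 = p * G} = {(G, 0), (0, p)} := by
  ext ⟨x, y⟩
  simp only [rectangle, mem_filter, mem_product, mem_range, mem_insert, mem_singleton,
    Prod.mk.injEq]
  constructor
  · rintro ⟨⟨hx, hy⟩, h⟩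
    obtain ⟨c, rfl⟩ : G ∣ x :=
      hcop.symm.dvd_of_dvd_mul_left ⟨p - y, by rw [Nat.mul_sub, mul_comm G p]; omega⟩
    obtain rfl | rfl : c = 0 ∨ c = 1 := by
      rcases Nat.lt_or_ge c 2 with hc | hc
      · omega
      · nlinarith
    · right
      exact ⟨by simp, Nat.eq_of_mul_eq_mul_left hG (by linarith)⟩
    · left
      exact ⟨by simp, by nlinarith⟩
  · rintro (⟨rfl, rfl⟩ | ⟨rfl, rfl⟩) <;> refine ⟨⟨by omega, by omega⟩, by ring⟩

lemma two_mul_card_belowDiagonal (hG : 0 < G) (hcop : p.Coprime G) :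
    2 * #(belowDiagonal p G) + 2 = (G + 1) * (p + 1) := by
  have hsplit : #(belowDiagonal p G) + #{v ∈ rectangle p G | p * v.1 + G * v.2 = p * G} +
      #{v ∈ rectangle p G | p * G < p * v.1 + G * v.2} = #(rectangle p G) := by
    rw [belowDiagonal, card_filter, card_filter, card_filter, ← sum_add_distrib,
      ← sum_add_distrib, card_eq_sum_ones]
    refine sum_congr rfl fun v _ => ?_
    rcases lt_trichotomy (p * v.1 + G * v.2) (p * G) with h | h | h
    · simp [h, h.ne, h.not_gt]
    · simp [h]
    · simp [h, h.ne', h.not_gt]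
  have hdiag : #{v ∈ rectangle p G | p * v.1 + G * v.2 = p * G} = 2 := by
    rw [filter_diagonal_eq_of_coprime hG hcop, card_pair (by simp; omega)]
  rw [← card_belowDiagonal_eq_card_filter_gt, hdiag, rectangle, card_product, card_range,
    card_range] at hsplit
  omega

end Diagonal

section Window

variable {p G : ℕ} {z : ℝ}

lemma pos_of_div_sub_one_div_sq_lt (hp : 0 < p) (hG : 0 < G)
    (hlo : (G : ℝ) / p - 1 / p ^ 2 < z) : 0 < z := by
  have hp' : (1 : ℝ) ≤ p := by exact_mod_cast hp
  have hG' : (1 : ℝ) ≤ G := by exact_mod_cast hG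
  have : 1 / (p : ℝ) ^ 2 ≤ G / p := by
    rw [div_le_div_iff₀ (by positivity) (by positivity)]
    nlinarith
  linarith

/-- No lattice point other than `(0, p)` lies on the line `x + z y = z p`, and none lies strictly
between it and the line through `(0, p)` and `(G, 0)`. -/
lemma add_mul_le_mul_iff_of_near (hp : 0 < p) (hG : 0 < G) (hz : Irrational z)
    (hlo : (G : ℝ) / p - 1 / p ^ 2 < z) (hhi : z < G / p) (x y : ℕ) :
    (x : ℝ) + z * y ≤ z * p ↔ (x, y) = (0, p) ∨ p * x + G * y < p * G := by
  have hp' : (0 : ℝ) < p := by exact_mod_cast hp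
  have hz0 := pos_of_div_sub_one_div_sq_lt hp hG hlo
  have hlo' : (G : ℝ) * p - 1 < z * p ^ 2 := by
    have e : (G : ℝ) / p - 1 / p ^ 2 = (G * p - 1) / p ^ 2 := by field_simp
    rwa [e, div_lt_iff₀ (by positivity)] at hlo
  have hhi' : z * p < G := (lt_div_iff₀ hp').1 hhi
  constructor
  · intro h
    rcases lt_trichotomy y p with hy | rfl | hy
    · right
      have hcast : ((p - y : ℕ) : ℝ) = p - y := Nat.cast_sub hy.le
      have hne : (x : ℝ) ≠ z * (p - y) :=
        hcast ▸ ((hz.mul_natCast (by omega)).ne_nat x).symm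
      have hx : (x : ℝ) < z * (p - y) := lt_of_le_of_ne (by linarith) hne
      have hyR : (y : ℝ) < p := by exact_mod_cast hy
      have : (p : ℝ) * x + G * y < p * G := by nlinarith
      exact_mod_cast this
    · left
      have : (x : ℝ) ≤ 0 := by linarith
      simp only [Prod.mk.injEq, and_true]
      exact_mod_cast this.antisymm x.cast_nonneg
    · have hyR : (p : ℝ) < y := by exact_mod_cast hy
      nlinarith [x.cast_nonneg (α := ℝ)]
  · rintro (h | h)
    · simp only [Prod.mk.injEq] at h
      obtain ⟨rfl, rfl⟩ := h
      simp
    · have hy : y < p := Nat.lt_of_mul_lt_mul_left (a := G) (by rw [mul_comm G p]; omega)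
      have hyR : (y : ℝ) < p := by exact_mod_cast hy
      have h' : (p : ℝ) * x + G * y + 1 ≤ p * G := by exact_mod_cast h
      nlinarith [mul_lt_mul_of_pos_right hlo' (sub_pos.2 hyR)]

lemma two_mul_latticeCount_of_near (hp : 0 < p) (hG : 0 < G) (hcop : p.Coprime G)
    (hz : Irrational z) (hlo : (G : ℝ) / p - 1 / p ^ 2 < z) (hhi : z < G / p) :
    2 * latticeCount z 0 p = (G + 1) * (p + 1) := by
  have hset : {v : ℕ × ℕ | (v.1 : ℝ) + z * v.2 ≤ ((0 : ℕ) : ℝ) + z * p} =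
      ↑(insert (0, p) (belowDiagonal p G)) := by
    ext ⟨x, y⟩
    simp only [Set.mem_ofPred_eq, Nat.cast_zero, zero_add, coe_insert, Set.mem_insert_iff,
      mem_coe, mem_belowDiagonal]
    exact add_mul_le_mul_iff_of_near hp hG hz hlo hhi x y
  have hcorner : (0, p) ∉ belowDiagonal p G := by simp [mem_belowDiagonal, mul_comm]
  rw [latticeCount, hset, Set.ncard_coe_finset, card_insert_of_notMem hcorner]
  linarith [two_mul_card_belowDiagonal hG hcop]

lemma mul_div_le_Kirr_of_near {q : ℕ} (hp : 0 < p) (hG : 0 < G) (hq : 0 < q)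
    (hcop : p.Coprime G) (hpq : (G + 1) * (p + 1) = (q + 1) * (q + 2)) (hz : Irrational z)
    (hlo : (G : ℝ) / p - 1 / p ^ 2 < z) (hhi : z < G / p) : p * z / q ≤ Kirr z := by
  have hd : dAB z 0 p = q := dAB_eq_of_two_mul_latticeCount_eq hq
    ((two_mul_latticeCount_of_near hp hG hcop hz hlo hhi).trans hpq)
  calc p * z / q = kAB z 0 p := by rw [kAB, hd, Nat.cast_zero, zero_add]
    _ ≤ Kirr z := kAB_le_Kirr (pos_of_div_sub_one_div_sq_lt hp hG hlo) 0 p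

end Window

theorem div_le_Kcap {p q G : ℕ} (hp : 0 < p) (hpG : p < G) (hq : 0 < q) (hcop : p.Coprime G)
    (hpq : (G + 1) * (p + 1) = (q + 1) * (q + 2)) : (G : ℝ) / q ≤ Kcap (G / p) := by
  have hp' : (0 : ℝ) < p := by exact_mod_cast hp
  have hq' : (0 : ℝ) < q := by exact_mod_cast hq
  have hb : (1 : ℝ) < G / p := by rw [one_lt_div hp']; exact_mod_cast hpG
  rw [Kcap, if_neg fun h => h ⟨G / p, by push_cast; rfl⟩]
  have hbdd : BddAbove {x : ℝ | ∃ z, Irrational z ∧ 1 < z ∧ z < G / p ∧ x = Kirr z} := by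
    refine ⟨1 + G / p, ?_⟩
    rintro _ ⟨z, -, hz1, hzb, rfl⟩
    linarith [Kirr_le_one_add (zero_lt_one.trans hz1)]
  refine le_of_forall_lt fun c hc => ?_
  have hcq : c * q / p < G / p := div_lt_div_of_pos_right ((lt_div_iff₀ hq').1 hc) hp'
  obtain ⟨z, hz, hlo, hhi⟩ := dense_irrational.exists_between
    (max_lt (max_lt hb (sub_lt_self _ (by positivity : (0 : ℝ) < 1 / p ^ 2))) hcq)
  simp only [max_lt_iff] at hlo
  obtain ⟨⟨hz1, hlo⟩, hcz⟩ := hlo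
  calc c < p * z / q := by rw [lt_div_iff₀ hq', mul_comm _ z]; exact (div_lt_iff₀ hp').1 hcz
    _ ≤ Kirr z := mul_div_le_Kirr_of_near hp (hp.trans hpG) hq hcop hpq hz hlo hhi
    _ ≤ _ := le_csSup hbdd ⟨z, hz, hz1, hhi, rfl⟩

namespace Nat

lemma fib_add_fib_add_four (n : ℕ) : fib n + fib (n + 4) = 3 * fib (n + 2) := by
  have h2 : fib (n + 2) = fib n + fib (n + 1) := fib_add_two
  have h3 : fib (n + 3) = fib (n + 1) + fib (n + 2) := fib_add_two
  have h4 : fib (n + 4) = fib (n + 2) + fib (n + 3) := fib_add_two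
  omega

lemma fib_mul_fib_add_four_of_odd {n : ℕ} (hn : Odd n) :
    fib n * fib (n + 4) = fib (n + 2) ^ 2 + 1 := by
  have h := Int.fib_add_sq_sub_fib_mul_fib_add_two_mul n 2
  rw [Int.natAbs_natCast, hn.neg_one_pow, show (n : ℤ) + 2 = (n + 2 : ℕ) by push_cast; rfl,
    show (n : ℤ) + 2 * 2 = (n + 4 : ℕ) by push_cast; rfl] at h
  simp only [Int.fib_natCast, Int.fib_two] at h
  zify
  linarith

lemma coprime_fib_fib_add_four_of_odd {n : ℕ} (hn : Odd n) : (fib n).Coprime (fib (n + 4)) := by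
  have hcop : n.Coprime (n + 4) := by
    rw [add_comm, Nat.coprime_add_self_right, show 4 = 2 ^ 2 from rfl]
    exact (Nat.coprime_two_right.2 hn).pow_right 2
  rw [Coprime, ← fib_gcd, hcop.gcd_eq_one, fib_one]

end Nat

/-- **Lemma 2.23 (le:ECH2).** `K(b_n) ≥ √(a_{n+1})` for all `n ≥ 1`, where
`b_n = g_{n+2}/g_n` and `√(a_{n+1}) = g_{n+2}/g_{n+1}`. -/
theorem stmt_8 (n : ℕ) (hn : 1 ≤ n) :
    (g (n + 2) : ℝ) / (g (n + 1) : ℝ) ≤ Kcap ((g (n + 2) : ℝ) / (g n : ℝ)) := by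
  obtain ⟨m, rfl⟩ : ∃ m, n = m + 1 := ⟨n - 1, by omega⟩
  have hodd : Odd (2 * m + 1) := odd_two_mul_add_one m
  show (Nat.fib (2 * m + 1 + 4) : ℝ) / Nat.fib (2 * m + 1 + 2) ≤
    Kcap (Nat.fib (2 * m + 1 + 4) / Nat.fib (2 * m + 1))
  have hsum := Nat.fib_add_fib_add_four (2 * m + 1)
  have hprod := Nat.fib_mul_fib_add_four_of_odd hodd
  refine div_le_Kcap (Nat.fib_pos.2 (by omega)) ?_ (Nat.fib_pos.2 (by omega))
    (Nat.coprime_fib_fib_add_four_of_odd hodd) (by nlinarith)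
  exact Nat.fib_add_two_strictMono (by omega : 2 * m < 2 * m + 3) |>.trans_le' Nat.fib_le_fib_succ
end

section
/- Given any three pairwise distinct nonnegative integers s_0, s_1, s_2, there exist rational numbers λ and μ such that f_{s_2+j} = λ f_{s_0+j} + μ f_{s_1+j} for all integers j ≥ 0. -/
/-!
Every shifted sequence `j ↦ f_{s+j}` is a combination of the two solutions `f_j` and `f_{j+1}`
of the Fibonacci recurrence, with coefficient vector `(f_{s+1} - f_s, f_s)`. By d'Ocagne's
identity the coefficient vectors of two distinct shifts `s < t` have determinant `± f_{t-s} ≠ 0`,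
so they span `ℚ²` and the coefficient vector of any third shift is a combination of them.
-/

open Nat

section Fibonacci

variable (R : Type*) [CommRing R]

theorem Nat.cast_fib_add (s j : ℕ) :
    (fib (s + j) : R) = (fib (s + 1) - fib s) * fib j + fib s * fib (j + 1) := by
  cases s with
  | zero => simp
  | succ t =>
    rw [show t + 1 + j = t + j + 1 by omega, Nat.fib_add, Nat.fib_add_two]
    push_cast
    ring

theorem Nat.cast_fib_dOcagne (m k : ℕ) :
    (fib (m + 1) * fib (m + k) - fib m * fib (m + k + 1) : R) = (-1) ^ m * fib k := by
  induction m with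
  | zero => simp
  | succ n ih =>
    rw [show n + 1 + k = n + k + 1 by omega, Nat.fib_add_two, Nat.fib_add_two]
    push_cast
    linear_combination (-1 : R) * ih

variable {R} [CharZero R]

theorem Nat.cast_fib_succ_mul_fib_sub_ne_zero {s t : ℕ} (hst : s ≠ t) :
    (fib (s + 1) * fib t - fib s * fib (t + 1) : R) ≠ 0 := by
  wlog hlt : s < t generalizing s t
  · have := this hst.symm (by omega)
    contrapose! this
    linear_combination -this
  obtain ⟨k, rfl⟩ := Nat.exists_eq_add_of_lt hlt
  rw [show s + k + 1 = s + (k + 1) by omega, Nat.cast_fib_dOcagne]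
  have hfib : (fib (k + 1) : R) ≠ 0 := by exact_mod_cast (Nat.fib_pos.2 k.succ_pos).ne'
  exact ((isUnit_neg_one.pow s).mul_right_eq_zero).not.2 hfib

end Fibonacci

theorem exists_eq_mul_add_mul_of_det_ne_zero {K : Type*} [Field K] {a b c d : K}
    (hdet : a * d - b * c ≠ 0) (p q : K) :
    ∃ x y : K, p = x * a + y * b ∧ q = x * c + y * d := by
  refine ⟨(p * d - b * q) / (a * d - b * c), (a * q - c * p) / (a * d - b * c), ?_, ?_⟩ <;>
  · rw [div_mul_eq_mul_div, div_mul_eq_mul_div, ← add_div, eq_div_iff hdet]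
    ring

theorem stmt_10_general (s₀ s₁ s₂ : ℕ) (h01 : s₀ ≠ s₁) :
    ∃ lam mu : ℚ, ∀ j : ℕ,
      (Nat.fib (s₂ + j) : ℚ) =
        lam * (Nat.fib (s₀ + j) : ℚ) + mu * (Nat.fib (s₁ + j) : ℚ) := by
  have hdet : ((fib (s₀ + 1) - fib s₀) * fib s₁ - (fib (s₁ + 1) - fib s₁) * fib s₀ : ℚ) ≠ 0 := by
    convert Nat.cast_fib_succ_mul_fib_sub_ne_zero (R := ℚ) h01 using 1
    ring
  obtain ⟨lam, mu, hfirst, hsecond⟩ :=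
    exists_eq_mul_add_mul_of_det_ne_zero hdet (fib (s₂ + 1) - fib s₂) (fib s₂)
  refine ⟨lam, mu, fun j => ?_⟩
  simp only [Nat.cast_fib_add ℚ _ j]
  rw [hfirst, hsecond]
  ring

/-- **Sublemma 3.3 (sl:basic).** Given any three pairwise distinct nonnegative
integers `s₀, s₁, s₂`, there are rational constants `λ, μ` such that
`f_{s₂+j} = λ f_{s₀+j} + μ f_{s₁+j}` for all `j ≥ 0`. -/
theorem stmt_10 (s₀ s₁ s₂ : ℕ) (h01 : s₀ ≠ s₁) (h02 : s₀ ≠ s₂) (h12 : s₁ ≠ s₂) :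
    ∃ lam mu : ℚ, ∀ j : ℕ,
      (Nat.fib (s₂ + j) : ℚ) =
        lam * (Nat.fib (s₀ + j) : ℚ) + mu * (Nat.fib (s₁ + j) : ℚ) :=
  stmt_10_general s₀ s₁ s₂ h01
end

section
/- Let (a_{ij})_{i,j ≥ 0} and (b_j)_{j ≥ 0} be families of rational numbers with only finitely many nonzero entries, and let c be a rational number. For each nonnegative integer s set Q(s) = Σ_{i,j ≥ 0} a_{ij} f_{s+i} f_{s+j} + Σ_{j ≥ 0} b_j f_{2s+j} + (−1)^s c. If Q(s) = 0 for three pairwise distinct nonnegative integers s, then Q(s) = 0 for all nonnegative integers s. Moreover, if all a_{ij} = 0 and c = 0 (so Q is homogeneous and linear), then Q(s) = 0 for two distinct nonnegative integers s already implies Q(s) = 0 for all nonnegative integers s. -/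
/-!
By Binet's formula, `f_{s+i} f_{s+j}`, `f_{2s+j}` and `(-1)^s` are all linear combinations of
`φ^{2s}`, `ψ^{2s}` and `(-1)^s`, hence so is `Q(s) = A φ^{2s} + B ψ^{2s} + D (-1)^s`.
As `φ²ψ² = 1`, `φ^{2s} Q(s) = A t² + D t + B` with `t = (-φ²)^s`, and distinct `s` give distinct
`t` because `|φ²| > 1`; a quadratic with three roots vanishes identically. In the homogeneous
linear case `φ^{2s} Q(s) = A (φ⁴)^s + B` is linear in `(φ⁴)^s`, so two zeros suffice.
-/

open Real Finset Polynomial Function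
open scoped goldenRatio

theorem pow_right_injective_of_one_lt_abs {α : Type*} [Field α] [LinearOrder α]
    [IsStrictOrderedRing α] {x : α} (hx : 1 < |x|) : Injective (x ^ · : ℕ → α) :=
  Injective.of_comp (f := abs) <| by
    simpa only [comp_def, ← pow_abs] using pow_right_injective₀ (one_pos.trans hx) hx.ne'

theorem eq_zero_of_mul_eq_eval {R ι : Type*} [CommRing R] [IsDomain R] {u w t : ι → R}
    {p : R[X]} (hw : ∀ s, w s ≠ 0) (ht : Injective t) (hp : ∀ s, w s * u s = p.eval (t s))
    {S : Finset ι} (hS : p.natDegree < #S) (hu : ∀ s ∈ S, u s = 0) : u = 0 := by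
  have hp0 : p = 0 :=
    eq_zero_of_natDegree_lt_card_of_eval_eq_zero p (f := fun s : S ↦ t s)
      (ht.comp Subtype.val_injective) (fun s ↦ by rw [← hp, hu s s.2, mul_zero])
      (by rwa [Fintype.card_coe])
  funext s
  simpa [hw s, hp0] using hp s

def quadraticFibSpan : Submodule ℝ (ℕ → ℝ) :=
  Submodule.span ℝ {fun s ↦ (φ ^ 2) ^ s, fun s ↦ (ψ ^ 2) ^ s, fun s ↦ (-1) ^ s}

def linearFibSpan : Submodule ℝ (ℕ → ℝ) :=
  Submodule.span ℝ {fun s ↦ (φ ^ 2) ^ s, fun s ↦ (ψ ^ 2) ^ s}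

theorem linearFibSpan_le_quadraticFibSpan : linearFibSpan ≤ quadraticFibSpan :=
  Submodule.span_mono <| Set.insert_subset_insert <|
    Set.singleton_subset_iff.2 <| Set.mem_insert _ _

theorem goldenRatio_sq_pow_mul_goldenConj_sq_pow (s : ℕ) : (φ ^ 2) ^ s * (ψ ^ 2) ^ s = 1 := by
  rw [← mul_pow, ← mul_pow, goldenRatio_mul_goldenConj]
  norm_num

theorem fib_add_mul_fib_add (s i j : ℕ) :
    (Nat.fib (s + i) * Nat.fib (s + j) : ℝ) =
      φ ^ (i + j) / 5 * (φ ^ 2) ^ s + ψ ^ (i + j) / 5 * (ψ ^ 2) ^ s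
        - (φ ^ i * ψ ^ j + ψ ^ i * φ ^ j) / 5 * (-1) ^ s := by
  have binet_product (x y : ℝ) : (x ^ (s + i) - y ^ (s + i)) * (x ^ (s + j) - y ^ (s + j)) =
      x ^ (i + j) * (x ^ 2) ^ s + y ^ (i + j) * (y ^ 2) ^ s
        - (x ^ i * y ^ j + y ^ i * x ^ j) * (x * y) ^ s := by
    ring
  rw [coe_fib_eq, coe_fib_eq, div_mul_div_comm, mul_self_sqrt (by norm_num), binet_product,
    goldenRatio_mul_goldenConj]
  ring

theorem fib_two_mul_add (s j : ℕ) :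
    (Nat.fib (2 * s + j) : ℝ) = φ ^ j / √5 * (φ ^ 2) ^ s - ψ ^ j / √5 * (ψ ^ 2) ^ s := by
  rw [coe_fib_eq, pow_add, pow_add, pow_mul, pow_mul]
  ring

theorem fib_add_mul_fib_add_mem_quadraticFibSpan (i j : ℕ) :
    (fun s ↦ (Nat.fib (s + i) * Nat.fib (s + j) : ℝ)) ∈ quadraticFibSpan := by
  simp_rw [fib_add_mul_fib_add]
  refine Submodule.mem_span_triple.2
    ⟨φ ^ (i + j) / 5, ψ ^ (i + j) / 5, -((φ ^ i * ψ ^ j + ψ ^ i * φ ^ j) / 5), ?_⟩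
  ext
  simp only [Pi.add_apply, Pi.smul_apply, smul_eq_mul]
  ring

theorem fib_two_mul_add_mem_linearFibSpan (j : ℕ) :
    (fun s ↦ (Nat.fib (2 * s + j) : ℝ)) ∈ linearFibSpan := by
  simp_rw [fib_two_mul_add]
  refine Submodule.mem_span_pair.2 ⟨φ ^ j / √5, -(ψ ^ j / √5), ?_⟩
  ext
  simp only [Pi.add_apply, Pi.smul_apply, smul_eq_mul]
  ring

theorem ratCast_finsum_mul_mem {ι : Type*} {V : Submodule ℝ (ℕ → ℝ)} {w : ι → ℚ}
    (hw : (support w).Finite) {g : ι → ℕ → ℚ} (hg : ∀ i, (fun s ↦ (g i s : ℝ)) ∈ V) :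
    (fun s ↦ ((∑ᶠ i, w i * g i s : ℚ) : ℝ)) ∈ V := by
  have hsum : (fun s ↦ ((∑ᶠ i, w i * g i s : ℚ) : ℝ)) =
      ∑ i ∈ hw.toFinset, (w i : ℝ) • fun s ↦ (g i s : ℝ) := by
    ext s
    rw [finsum_eq_sum_of_support_subset _
      ((support_mul_subset_left _ _).trans hw.coe_toFinset.superset)]
    push_cast
    simp only [Finset.sum_apply, Pi.smul_apply, smul_eq_mul]
  rw [hsum]
  exact Submodule.sum_mem _ fun i _ ↦ Submodule.smul_mem _ _ (hg i)

theorem eq_zero_of_mem_quadraticFibSpan {u : ℕ → ℝ} (hu : u ∈ quadraticFibSpan) {S : Finset ℕ}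
    (hS : 2 < #S) (hzero : ∀ s ∈ S, u s = 0) : u = 0 := by
  obtain ⟨A, B, D, rfl⟩ := Submodule.mem_span_triple.1 hu
  have hφ : 1 < |-φ ^ 2| := by
    rw [abs_neg, abs_of_pos (by positivity)]
    exact one_lt_pow₀ one_lt_goldenRatio two_ne_zero
  refine eq_zero_of_mul_eq_eval (w := fun s ↦ (φ ^ 2) ^ s) (t := fun s ↦ (-φ ^ 2) ^ s)
    (p := C A * X ^ 2 + C D * X + C B) (fun s ↦ by positivity)
    (pow_right_injective_of_one_lt_abs hφ) (fun s ↦ ?_) (natDegree_quadratic_le.trans_lt hS) hzero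
  have hsign : ((-1 : ℝ) ^ s) ^ 2 = 1 := by rw [← pow_mul, mul_comm, pow_mul, neg_one_sq, one_pow]
  simp only [Pi.add_apply, Pi.smul_apply, smul_eq_mul, eval_add, eval_mul, eval_C, eval_pow,
    eval_X, neg_pow (φ ^ 2)]
  linear_combination B * goldenRatio_sq_pow_mul_goldenConj_sq_pow s - A * ((φ ^ 2) ^ s) ^ 2 * hsign

theorem eq_zero_of_mem_linearFibSpan {u : ℕ → ℝ} (hu : u ∈ linearFibSpan) {S : Finset ℕ}
    (hS : 1 < #S) (hzero : ∀ s ∈ S, u s = 0) : u = 0 := by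
  obtain ⟨A, B, rfl⟩ := Submodule.mem_span_pair.1 hu
  refine eq_zero_of_mul_eq_eval (w := fun s ↦ (φ ^ 2) ^ s) (t := fun s ↦ (φ ^ 4) ^ s)
    (p := C A * X + C B) (fun s ↦ by positivity)
    (pow_right_injective₀ (by positivity) (one_lt_pow₀ one_lt_goldenRatio four_ne_zero).ne')
    (fun s ↦ ?_) (natDegree_linear_le.trans_lt hS) hzero
  have hφ4 : (φ ^ 4) ^ s = (φ ^ 2) ^ s * (φ ^ 2) ^ s := by rw [← mul_pow, ← pow_add]
  simp only [Pi.add_apply, Pi.smul_apply, smul_eq_mul, eval_add, eval_mul, eval_C, eval_X, hφ4]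
  linear_combination B * goldenRatio_sq_pow_mul_goldenConj_sq_pow s

/-- **Proposition 3.5 (prop:proof).** Let `Q(s) = Σ_{i,j} a_{ij} f_{s+i} f_{s+j}
+ Σ_j b_j f_{2s+j} + (−1)^s c` with finitely many nonzero coefficients.  If
`Q(s) = 0` for three pairwise distinct nonnegative integers `s`, then `Q(s) = 0`
for all `s`.  If moreover the relation is homogeneous and linear (all
`a_{ij} = 0` and `c = 0`), two distinct values of `s` suffice. -/
theorem stmt_12 (a : ℕ → ℕ → ℚ) (b : ℕ → ℚ) (c : ℚ)
    (ha : {p : ℕ × ℕ | a p.1 p.2 ≠ 0}.Finite)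
    (hb : {j : ℕ | b j ≠ 0}.Finite)
    (Q : ℕ → ℚ)
    (hQ : ∀ s : ℕ, Q s =
      (∑ᶠ p : ℕ × ℕ, a p.1 p.2 * (Nat.fib (s + p.1) : ℚ) * (Nat.fib (s + p.2) : ℚ))
        + (∑ᶠ j : ℕ, b j * (Nat.fib (2 * s + j) : ℚ)) + (-1) ^ s * c) :
    (∀ s₀ s₁ s₂ : ℕ, s₀ ≠ s₁ → s₀ ≠ s₂ → s₁ ≠ s₂ →
      Q s₀ = 0 → Q s₁ = 0 → Q s₂ = 0 → ∀ s : ℕ, Q s = 0) ∧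
    ((∀ i j : ℕ, a i j = 0) → c = 0 →
      ∀ s₀ s₁ : ℕ, s₀ ≠ s₁ → Q s₀ = 0 → Q s₁ = 0 → ∀ s : ℕ, Q s = 0) := by
  set F : ℕ → ℝ := fun s ↦
    ((∑ᶠ p : ℕ × ℕ, a p.1 p.2 * (Nat.fib (s + p.1) : ℚ) * (Nat.fib (s + p.2) : ℚ) : ℚ) : ℝ)
  set G : ℕ → ℝ := fun s ↦ ((∑ᶠ j : ℕ, b j * (Nat.fib (2 * s + j) : ℚ) : ℚ) : ℝ)
  have hF : F ∈ quadraticFibSpan := by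
    simp only [F, mul_assoc]
    exact ratCast_finsum_mul_mem ha fun p ↦ by
      push_cast; exact fib_add_mul_fib_add_mem_quadraticFibSpan p.1 p.2
  have hG : G ∈ linearFibSpan := ratCast_finsum_mul_mem hb fun j ↦ by
    push_cast; exact fib_two_mul_add_mem_linearFibSpan j
  have hQFG : (fun s ↦ (Q s : ℝ)) = F + G + (c : ℝ) • fun s ↦ (-1) ^ s := by
    ext s; simp [hQ, F, G, mul_comm]
  refine ⟨fun s₀ s₁ s₂ h01 h02 h12 h0 h1 h2 s ↦ ?_, fun ha0 hc0 s₀ s₁ h01 h0 h1 s ↦ ?_⟩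
  · have hmem : (fun s ↦ (Q s : ℝ)) ∈ quadraticFibSpan := by
      rw [hQFG]
      exact add_mem (add_mem hF (linearFibSpan_le_quadraticFibSpan hG))
        (Submodule.smul_mem _ _ (Submodule.subset_span (by simp)))
    have hcard : #{s₀, s₁, s₂} = 3 := card_eq_three.2 ⟨_, _, _, h01, h02, h12, rfl⟩
    have hQ0 := eq_zero_of_mem_quadraticFibSpan hmem (S := {s₀, s₁, s₂}) (by rw [hcard]; norm_num)
      (by simp [h0, h1, h2])
    exact Rat.cast_eq_zero.1 (congrFun hQ0 s)
  · have hmem : (fun s ↦ (Q s : ℝ)) ∈ linearFibSpan := by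
      convert hG using 1
      ext s; simp [hQ, G, ha0, hc0]
    have hQ0 := eq_zero_of_mem_linearFibSpan hmem (S := {s₀, s₁}) (by rw [card_pair h01]; norm_num)
      (by simp [h0, h1])
    exact Rat.cast_eq_zero.1 (congrFun hQ0 s)
end

section
/- Let n = 2m with m ≥ 2 an integer. For 0 ≤ k ≤ m−1 set u_k = f_{2(n−k)−1}² + 2 H_k, and for 1 ≤ k ≤ m set v_k = 3 F_{n−k} − 2 F_k. Then: (i) f_{2n+1}² = 6 u_0 + v_1 and v_1 < u_0; (ii) u_k = v_{k+1} + u_{k+1} and u_{k+1} < v_{k+1} for 0 ≤ k ≤ m−2; (iii) v_k = 5 u_k + v_{k+1} and v_{k+1} < u_k for 1 ≤ k ≤ m−1; (iv) u_{m−1} = 3 F_m + L_{m−1} and L_{m−1} < F_m. -/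
/-- The Lucas numbers `ℓ_k = f_{k-1} + f_{k+1}` (for `k ≥ 1`). -/
def luc (k : ℕ) : ℕ := Nat.fib (k - 1) + Nat.fib (k + 1)

/-- `F_k = f_{4k}/3`. -/
def Fq (k : ℕ) : ℚ := (Nat.fib (4 * k) : ℚ) / 3

/-- `L_k = ℓ_{4k+2}/3`. -/
def Lq (k : ℕ) : ℚ := (luc (4 * k + 2) : ℚ) / 3

/-- `H_k = f_{2k} f_{2k+2}/3`. -/
def Hq (k : ℕ) : ℚ := ((Nat.fib (2 * k) : ℚ) * (Nat.fib (2 * k + 2) : ℚ)) / 3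


local notation:max "fb" j:max => ((Nat.fib j : ℚ))


lemma L_step (j : ℕ) : fb (j+2) = fb j + fb (j+1) := by
  rw [Nat.fib_add_two]; push_cast; ring

lemma L_add (p q : ℕ) : fb (p+q+1) = fb p * fb q + fb (p+1) * fb (q+1) := by
  rw [Nat.fib_add]; push_cast; ring

lemma L_mono {i j : ℕ} (h : i ≤ j) : fb i ≤ fb j := by
  exact_mod_cast Nat.fib_mono h

lemma L_nonneg (j : ℕ) : 0 ≤ fb j := by positivity

lemma L_pos (j : ℕ) : 0 < fb (j+1) := by
  exact_mod_cast Nat.fib_pos.mpr (by omega)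

lemma L_lt (j : ℕ) : fb (j+2) < fb (j+3) := by
  have := Nat.fib_lt_fib_succ (n := j+2) (by omega)
  exact_mod_cast this

lemma s2 (k : ℕ) : fb (2*k+2) = fb (2*k) + fb (2*k+1) := L_step (2*k)

lemma s3 (k : ℕ) : fb (2*k+3) = fb (2*k+1) + fb (2*k+2) := by
  have := L_step (2*k+1); rwa [show 2*k+1+2 = 2*k+3 by ring, show 2*k+1+1 = 2*k+2 by ring] at this

lemma s4 (k : ℕ) : fb (2*k+4) = fb (2*k+2) + fb (2*k+3) := by
  have := L_step (2*k+2); rwa [show 2*k+2+2 = 2*k+4 by ring, show 2*k+2+1 = 2*k+3 by ring] at this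

lemma s5 (k : ℕ) : fb (2*k+5) = fb (2*k+3) + fb (2*k+4) := by
  have := L_step (2*k+3); rwa [show 2*k+3+2 = 2*k+5 by ring, show 2*k+3+1 = 2*k+4 by ring] at this

lemma dbl (k : ℕ) : fb (4*k+4) = fb (2*k+1) * fb (2*k+2) + fb (2*k+2) * fb (2*k+3) := by
  have := L_add (2*k+1) (2*k+2)
  rwa [show 2*k+1+(2*k+2)+1 = 4*k+4 by ring, show 2*k+1+1 = 2*k+2 by ring,
    show 2*k+2+1 = 2*k+3 by ring] at this

lemma dbl8 (k : ℕ) : fb (4*k+8) = fb (2*k+3) * fb (2*k+4) + fb (2*k+4) * fb (2*k+5) := by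
  have := L_add (2*k+3) (2*k+4)
  rwa [show 2*k+3+(2*k+4)+1 = 4*k+8 by ring, show 2*k+3+1 = 2*k+4 by ring,
    show 2*k+4+1 = 2*k+5 by ring] at this

lemma oddsq (j : ℕ) : fb (2*j+1) = fb j ^ 2 + fb (j+1) ^ 2 := by
  have := L_add j j
  rw [show j+j+1 = 2*j+1 by ring] at this
  rw [this]; ring

lemma cassO (j : ℕ) : fb (2*j+2)^2 = fb (2*j+1)^2 + fb (2*j+1) * fb (2*j+2) - 1 := by
  induction j with
  | zero => norm_num
  | succ j ih =>
    rw [show 2*(j+1)+2 = 2*j+4 by ring, show 2*(j+1)+1 = 2*j+3 by ring, s4 j, s3 j]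
    linear_combination ih

lemma lemI (c : ℕ) : fb (2*c+5)^2 = 6 * fb (2*c+3)^2 + fb (4*c+4) - 2 := by
  rw [dbl c, s5 c, s4 c, s3 c]
  linear_combination 2 * cassO c

lemma lemI' (c : ℕ) : fb (4*c+4) < fb (2*c+3)^2 + 2 := by
  rw [dbl c, s3 c]
  nlinarith [sq_nonneg (fb (2*c+1))]

lemma lemII (c k : ℕ) :
    3 * fb (2*c+3)^2 + 2 * fb (2*k) * fb (2*k+2) =
    3 * fb (4*c+4) - 2 * fb (4*k+4) + 3 * fb (2*c+1)^2 + 2 * fb (2*k+2) * fb (2*k+4) := by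
  rw [dbl c, dbl k, s3 c, s4 k, s3 k, s2 k]
  ring

lemma lemII' (k c : ℕ) (h : k + 1 ≤ c) :
    3 * fb (2*c+1)^2 + 2 * fb (2*k+2) * fb (2*k+4) + 2 * fb (4*k+4) < 3 * fb (4*c+4) := by
  rw [dbl c, dbl k, s4 k, s3 k, s3 c]
  have hB' : fb (2*k+1) + fb (2*k+2) ≤ fb (2*c+1) := by
    rw [← s3 k]; exact L_mono (by omega)
  have hxy : fb (2*c+1) < fb (2*c+2) := by
    have := L_lt (2*c-1)
    rwa [show 2*c-1+2 = 2*c+1 by omega, show 2*c-1+3 = 2*c+2 by omega] at this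
  have h1 : 0 ≤ fb (2*k+1) := L_nonneg _
  have h2 : 0 ≤ fb (2*k+2) := L_nonneg _
  have h3 : 0 ≤ fb (2*c+1) := L_nonneg _
  have hAx : fb (2*k+2) ≤ fb (2*c+1) := by linarith
  have hkey : fb (2*k+2) * (fb (2*k+1) + fb (2*k+2)) ≤ fb (2*c+1) * fb (2*c+2) :=
    mul_le_mul hAx (hB'.trans hxy.le) (by linarith) h3
  nlinarith [hkey, hxy, h3]

lemma lemIII (c e : ℕ) :
    3 * fb (4*c+8) - 2 * fb (4*e+4) =
    15 * fb (2*c+3)^2 + 10 * fb (2*e+2) * fb (2*e+4) + 3 * fb (4*c+4) - 2 * fb (4*e+8) := by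
  rw [dbl8 c, dbl c, dbl8 e, dbl e, s5 c, s4 c, s3 c, s5 e, s4 e, s3 e]
  linear_combination 6 * cassO c - 6 * cassO e

lemma lemIII' (c e : ℕ) :
    3 * fb (4*c+4) - 2 * fb (4*e+8) < 3 * fb (2*c+3)^2 + 2 * fb (2*e+2) * fb (2*e+4) := by
  rw [dbl c, s3 c]
  nlinarith [L_pos (2*c), L_nonneg (4*e+8), mul_nonneg (L_nonneg (2*e+2)) (L_nonneg (2*e+4)),
    mul_pos (L_pos (2*c)) (L_pos (2*c))]

lemma lemIV (t : ℕ) :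
    3 * fb (2*t+5)^2 + 2 * fb (2*t+2) * fb (2*t+4) =
    3 * fb (4*t+8) + fb (4*t+5) + fb (4*t+7) := by
  have h5 : fb (4*t+5) = fb (2*t+2)^2 + fb (2*t+3)^2 := by
    have := oddsq (2*t+2)
    rwa [show 2*(2*t+2)+1 = 4*t+5 by ring, show 2*t+2+1 = 2*t+3 by ring] at this
  have h7 : fb (4*t+7) = fb (2*t+3)^2 + fb (2*t+4)^2 := by
    have := oddsq (2*t+3)
    rwa [show 2*(2*t+3)+1 = 4*t+7 by ring, show 2*t+3+1 = 2*t+4 by ring] at this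
  rw [dbl8 t, h5, h7, s5 t, s4 t]
  ring

lemma lemIV' (t : ℕ) : fb (4*t+5) + fb (4*t+7) < fb (4*t+8) := by
  have h1 : Nat.fib (4*t+8) = Nat.fib (4*t+6) + Nat.fib (4*t+7) := by
    have := Nat.fib_add_two (n := 4*t+6); rwa [show 4*t+6+2 = 4*t+8 by ring] at this
  have h2 : Nat.fib (4*t+5) < Nat.fib (4*t+6) :=
    Nat.fib_lt_fib_succ (n := 4*t+5) (by omega)
  have : Nat.fib (4*t+5) + Nat.fib (4*t+7) < Nat.fib (4*t+8) := by omega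
  exact_mod_cast this

/-- **Lemma 3.11 (le:expanan).** Let `n = 2m` with `m ≥ 2`.  For
`0 ≤ k ≤ m−1` set `u_k = f_{2(n−k)−1}² + 2H_k`, and for `1 ≤ k ≤ m` set
`v_k = 3F_{n−k} − 2F_k`.  Then:
(i) `f_{2n+1}² = 6u_0 + v_1` and `v_1 < u_0`;
(ii) `u_k = v_{k+1} + u_{k+1}` and `u_{k+1} < v_{k+1}` for `0 ≤ k ≤ m−2`;
(iii) `v_k = 5u_k + v_{k+1}` and `v_{k+1} < u_k` for `1 ≤ k ≤ m−1`;
(iv) `u_{m−1} = 3F_m + L_{m−1}` and `L_{m−1} < F_m`. -/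
theorem stmt_14 (m : ℕ) (hm : 2 ≤ m) (n : ℕ) (hn : n = 2 * m)
    (u v : ℕ → ℚ)
    (hu : ∀ k ≤ m - 1, u k = (Nat.fib (2 * (n - k) - 1) : ℚ) ^ 2 + 2 * Hq k)
    (hv : ∀ k, 1 ≤ k → k ≤ m → v k = 3 * Fq (n - k) - 2 * Fq k) :
    ((Nat.fib (2 * n + 1) : ℚ) ^ 2 = 6 * u 0 + v 1 ∧ v 1 < u 0) ∧
    (∀ k ≤ m - 2, u k = v (k + 1) + u (k + 1) ∧ u (k + 1) < v (k + 1)) ∧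
    (∀ k, 1 ≤ k → k ≤ m - 1 → v k = 5 * u k + v (k + 1) ∧ v (k + 1) < u k) ∧
    (u (m - 1) = 3 * Fq m + Lq (m - 1) ∧ Lq (m - 1) < Fq m) := by
  obtain ⟨t, rfl⟩ : ∃ t, m = t + 2 := ⟨m - 2, by omega⟩
  subst hn
  have h0 : (Nat.fib 0 : ℚ) = 0 := by norm_num
  have h4 : (Nat.fib 4 : ℚ) = 3 := by norm_num [show Nat.fib 4 = 3 from rfl]
  refine ⟨⟨?_, ?_⟩, ?_, ?_, ?_, ?_⟩
  · rw [hu 0 (by omega), hv 1 (by omega) (by omega)]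
    simp only [Fq, Hq]
    rw [show 2*(2*(t+2))+1 = 2*(2*t+2)+5 by ring,
        show 2*(2*(t+2)-0)-1 = 2*(2*t+2)+3 by omega,
        show 4*(2*(t+2)-1) = 4*(2*t+2)+4 by omega,
        show 2*0 = 0 by rfl, show 2*0+2 = 2 by rfl, show 4*1 = 4 by rfl, h0, h4]
    linear_combination lemI (2*t+2)
  · rw [hu 0 (by omega), hv 1 (by omega) (by omega)]
    simp only [Fq, Hq]
    rw [show 2*(2*(t+2)-0)-1 = 2*(2*t+2)+3 by omega,
        show 4*(2*(t+2)-1) = 4*(2*t+2)+4 by omega,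
        show 2*0 = 0 by rfl, show 2*0+2 = 2 by rfl, show 4*1 = 4 by rfl, h0, h4]
    have := lemI' (2*t+2)
    linarith
  · intro k hk
    obtain ⟨s, rfl⟩ : ∃ s, t = k + s := ⟨t - k, by omega⟩
    constructor
    · rw [hu k (by omega), hu (k+1) (by omega), hv (k+1) (by omega) (by omega)]
      simp only [Fq, Hq]
      rw [show 2*(2*(k+s+2)-k)-1 = 2*(k+2*s+2)+3 by omega,
          show 2*(2*(k+s+2)-(k+1))-1 = 2*(k+2*s+2)+1 by omega,
          show 4*(2*(k+s+2)-(k+1)) = 4*(k+2*s+2)+4 by omega,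
          show 4*(k+1) = 4*k+4 by ring,
          show 2*(k+1)+2 = 2*k+4 by ring, show 2*(k+1) = 2*k+2 by ring]
      linear_combination (1/3 : ℚ) * lemII (k+2*s+2) k
    · rw [hu (k+1) (by omega), hv (k+1) (by omega) (by omega)]
      simp only [Fq, Hq]
      rw [show 2*(2*(k+s+2)-(k+1))-1 = 2*(k+2*s+2)+1 by omega,
          show 4*(2*(k+s+2)-(k+1)) = 4*(k+2*s+2)+4 by omega,
          show 4*(k+1) = 4*k+4 by ring,
          show 2*(k+1)+2 = 2*k+4 by ring, show 2*(k+1) = 2*k+2 by ring]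
      have := lemII' k (k+2*s+2) (by omega)
      linarith
  · intro k hk1 hk2
    obtain ⟨e, rfl⟩ : ∃ e, k = e + 1 := ⟨k - 1, by omega⟩
    obtain ⟨s, rfl⟩ : ∃ s, t = e + s := ⟨t - e, by omega⟩
    rw [show e+1+1 = e+2 by omega]
    constructor
    · rw [hv (e+1) (by omega) (by omega), hu (e+1) (by omega), hv (e+2) (by omega) (by omega)]
      simp only [Fq, Hq]
      rw [show 4*(2*(e+s+2)-(e+1)) = 4*(e+2*s+1)+8 by omega,
          show 4*(e+1) = 4*e+4 by ring,
          show 2*(2*(e+s+2)-(e+1))-1 = 2*(e+2*s+1)+3 by omega,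
          show 2*(e+1)+2 = 2*e+4 by ring, show 2*(e+1) = 2*e+2 by ring,
          show 4*(2*(e+s+2)-(e+2)) = 4*(e+2*s+1)+4 by omega,
          show 4*(e+2) = 4*e+8 by ring]
      linear_combination (1/3 : ℚ) * lemIII (e+2*s+1) e
    · rw [hu (e+1) (by omega), hv (e+2) (by omega) (by omega)]
      simp only [Fq, Hq]
      rw [show 2*(2*(e+s+2)-(e+1))-1 = 2*(e+2*s+1)+3 by omega,
          show 2*(e+1)+2 = 2*e+4 by ring, show 2*(e+1) = 2*e+2 by ring,
          show 4*(2*(e+s+2)-(e+2)) = 4*(e+2*s+1)+4 by omega,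
          show 4*(e+2) = 4*e+8 by ring]
      have := lemIII' (e+2*s+1) e
      linarith
  · rw [show t+2-1 = t+1 by omega, hu (t+1) (by omega)]
    simp only [Fq, Hq, Lq, luc]
    push_cast
    rw [show 2*(2*(t+2)-(t+1))-1 = 2*t+5 by omega,
        show 2*(t+1)+2 = 2*t+4 by ring, show 2*(t+1) = 2*t+2 by ring,
        show 4*(t+2) = 4*t+8 by ring,
        show 4*(t+1)+1 = 4*t+5 by omega, show 4*(t+1)+2+1 = 4*t+7 by ring]
    linear_combination (1/3 : ℚ) * lemIV t
  · rw [show t+2-1 = t+1 by omega]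
    simp only [Fq, Lq, luc]
    push_cast
    rw [show 4*(t+2) = 4*t+8 by ring,
        show 4*(t+1)+1 = 4*t+5 by omega, show 4*(t+1)+2+1 = 4*t+7 by ring]
    have := lemIV' t
    linarith
end

section
/- For all integers k ≥ 1 and j ≥ 1: (i) [6; (1,5)^{×(k−1)}, 1] = F_{k+1}/F_k and [6; (1,5)^{×k}] = L_{k+1}/L_k; (ii) [6; (1,5)^{×(k−1)}, 1, 6, j] = (F_{k+1} + j F_{k+2})/(F_k + j F_{k+1}); (iii) [6; (1,5)^{×(k−1)}, 1, j] = (L_k + j F_{k+1})/(L_{k−1} + j F_k). -/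
/-- The value `a₀ + 1/(a₁ + 1/(⋯ + 1/a_n))` of a finite continued fraction. -/
def cfVal : List ℕ → ℚ
  | [] => 0
  | [a] => (a : ℚ)
  | a :: b :: l => (a : ℚ) + 1 / cfVal (b :: l)

def Gq : ℕ → ℚ
  | 0 => -1
  | (n+1) => Fq n

lemma Gq_succ (n : ℕ) : Gq (n+1) = Fq n := rfl

lemma cfVal_cons (a : ℕ) (l : List ℕ) : cfVal (a :: l) = a + 1 / cfVal l := by
  cases l with
  | nil => simp [cfVal]
  | cons b m => rfl

lemma cfVal_nonneg : ∀ l : List ℕ, 0 ≤ cfVal l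
  | [] => le_refl 0
  | (a :: m) => by
      rw [cfVal_cons]
      have h := cfVal_nonneg m
      have h2 : (0:ℚ) ≤ 1 / cfVal m := one_div_nonneg.mpr h
      have h3 : (0:ℚ) ≤ (a:ℚ) := Nat.cast_nonneg a
      linarith

lemma fib_step7 (n : ℕ) : Nat.fib (n+8) + Nat.fib n = 7 * Nat.fib (n+4) := by
  have h2 : Nat.fib (n+2) = Nat.fib n + Nat.fib (n+1) := Nat.fib_add_two
  have h3 : Nat.fib (n+3) = Nat.fib (n+1) + Nat.fib (n+2) := Nat.fib_add_two
  have h4 : Nat.fib (n+4) = Nat.fib (n+2) + Nat.fib (n+3) := Nat.fib_add_two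
  have h5 : Nat.fib (n+5) = Nat.fib (n+3) + Nat.fib (n+4) := Nat.fib_add_two
  have h6 : Nat.fib (n+6) = Nat.fib (n+4) + Nat.fib (n+5) := Nat.fib_add_two
  have h7 : Nat.fib (n+7) = Nat.fib (n+5) + Nat.fib (n+6) := Nat.fib_add_two
  have h8 : Nat.fib (n+8) = Nat.fib (n+6) + Nat.fib (n+7) := Nat.fib_add_two
  omega

lemma fib_step6 (n : ℕ) : Nat.fib (n+5) + Nat.fib (n+7) + Nat.fib n = 6 * Nat.fib (n+4) := by
  have h2 : Nat.fib (n+2) = Nat.fib n + Nat.fib (n+1) := Nat.fib_add_two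
  have h3 : Nat.fib (n+3) = Nat.fib (n+1) + Nat.fib (n+2) := Nat.fib_add_two
  have h4 : Nat.fib (n+4) = Nat.fib (n+2) + Nat.fib (n+3) := Nat.fib_add_two
  have h5 : Nat.fib (n+5) = Nat.fib (n+3) + Nat.fib (n+4) := Nat.fib_add_two
  have h6 : Nat.fib (n+6) = Nat.fib (n+4) + Nat.fib (n+5) := Nat.fib_add_two
  have h7 : Nat.fib (n+7) = Nat.fib (n+5) + Nat.fib (n+6) := Nat.fib_add_two
  omega

lemma Fq_rec : ∀ k, Fq (k+1) = 7 * Fq k - Gq k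
  | 0 => by
      have h4 : Nat.fib 4 = 3 := by decide
      norm_num [Fq, Gq, h4]
  | (p+1) => by
      have h := fib_step7 (4*p)
      have h' : (Nat.fib (4*p+8) : ℚ) = 7 * (Nat.fib (4*p+4) : ℚ) - (Nat.fib (4*p) : ℚ) := by
        have := congrArg (fun n : ℕ => (n : ℚ)) h
        push_cast at this
        linarith
      simp only [Fq, Gq]
      have e1 : 4*(p+1+1) = 4*p+8 := by ring
      have e2 : 4*(p+1) = 4*p+4 := by ring
      rw [e1, e2, h']; ring

lemma Lq_eq : ∀ k, Lq k = 6 * Fq k - Gq k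
  | 0 => by
      have h2 : luc 2 = 3 := by decide
      norm_num [Lq, Fq, Gq, h2]
  | (p+1) => by
      have h := fib_step6 (4*p)
      have hl : luc (4*(p+1)+2) = Nat.fib (4*p+5) + Nat.fib (4*p+7) := by
        simp only [luc]
        congr 1 <;> congr 1 <;> omega
      have h' : (luc (4*(p+1)+2) : ℚ) = 6 * (Nat.fib (4*p+4) : ℚ) - (Nat.fib (4*p) : ℚ) := by
        rw [hl]
        have := congrArg (fun n : ℕ => (n : ℚ)) h
        push_cast at this ⊢
        linarith
      simp only [Lq, Fq, Gq]
      have e2 : 4*(p+1) = 4*p+4 := by ring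
      rw [h', e2]; ring

lemma Fq_pos (k : ℕ) : 0 < Fq (k+1) := by
  have h : 0 < Nat.fib (4*(k+1)) := Nat.fib_pos.mpr (by omega)
  have h' : (0:ℚ) < (Nat.fib (4*(k+1)) : ℚ) := by exact_mod_cast h
  simp only [Fq]; positivity

lemma Fq_nonneg (k : ℕ) : 0 ≤ Fq k := by
  simp only [Fq]; positivity

lemma Lq_pos (k : ℕ) : 0 < Lq k := by
  have h : 0 < Nat.fib (4*k+2+1) := Nat.fib_pos.mpr (by omega)
  have h2 : 0 < luc (4*k+2) := by simp only [luc]; omega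
  have h' : (0:ℚ) < (luc (4*k+2) : ℚ) := by exact_mod_cast h2
  simp only [Lq]; positivity

lemma master : ∀ (k : ℕ) (l : List ℕ),
    cfVal (6 :: ((List.replicate k ([1,5] : List ℕ)).flatten ++ l))
      = (Fq (k+1) * cfVal (6 :: l) - Fq k) / (Fq k * cfVal (6 :: l) - Gq k)
  | 0, l => by
      have h4 : Nat.fib 4 = 3 := by decide
      norm_num [Fq, Gq, h4]
  | (k+1), l => by
      have IH := master k l
      set x := cfVal (6 :: l) with hx
      set z := cfVal (6 :: ((List.replicate k ([1,5] : List ℕ)).flatten ++ l)) with hzdef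
      have hz6 : 6 ≤ z := by
        rw [hzdef, cfVal_cons]
        have h := one_div_nonneg.mpr (cfVal_nonneg ((List.replicate k ([1,5] : List ℕ)).flatten ++ l))
        push_cast
        linarith
      have hz0 : z ≠ 0 := by intro h; rw [h] at hz6; norm_num at hz6
      have hzm1 : (0:ℚ) < z - 1 := by linarith
      have hz1 : z - 1 ≠ 0 := ne_of_gt hzm1
      have hsum : (1:ℚ) + 1/(z-1) ≠ 0 := by
        have := one_div_pos.mpr hzm1; linarith
      have hL : cfVal (6 :: ((List.replicate (k+1) ([1,5] : List ℕ)).flatten ++ l)) = 7 - 1/z := by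
        have hsplit : (List.replicate (k+1) ([1,5] : List ℕ)).flatten ++ l
            = 1 :: 5 :: ((List.replicate k ([1,5] : List ℕ)).flatten ++ l) := by
          simp [List.replicate_succ]
        have hz5 : cfVal (5 :: ((List.replicate k ([1,5] : List ℕ)).flatten ++ l)) = z - 1 := by
          rw [hzdef, cfVal_cons, cfVal_cons]; push_cast; ring
        rw [hsplit, cfVal_cons, cfVal_cons, hz5]
        push_cast
        field_simp
        ring
      have hD : Fq k * x - Gq k ≠ 0 := by
        intro h; rw [h, div_zero] at IH; exact hz0 IH
      have hN : Fq (k+1) * x - Fq k ≠ 0 := by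
        intro h; rw [h, zero_div] at IH; exact hz0 IH
      have hN' : (7 * Fq k - Gq k) * x - Fq k ≠ 0 := by rw [← Fq_rec k]; exact hN
      rw [hL, IH, Fq_rec (k+1), Gq_succ, Fq_rec k]
      field_simp
      ring

lemma cfVal_six (l : List ℕ) : 6 ≤ cfVal (6 :: l) := by
  rw [cfVal_cons]
  have h := one_div_nonneg.mpr (cfVal_nonneg l)
  push_cast
  linarith

lemma masterD (k : ℕ) (l : List ℕ) : Fq k * cfVal (6 :: l) - Gq k ≠ 0 := by
  have h := master k l
  have h6 := cfVal_six ((List.replicate k ([1,5] : List ℕ)).flatten ++ l)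
  intro hD
  rw [hD, div_zero] at h
  rw [h] at h6
  norm_num at h6


/-- **Lemma 4.4 (le:Fpq).** For all `k ≥ 1` and `j ≥ 1`:
(i) `[6;(1,5)^{k−1},1] = F_{k+1}/F_k` and `[6;(1,5)^k] = L_{k+1}/L_k`;
(ii) `[6;(1,5)^{k−1},1,6,j] = (F_{k+1}+jF_{k+2})/(F_k+jF_{k+1})`;
(iii) `[6;(1,5)^{k−1},1,j] = (L_k+jF_{k+1})/(L_{k−1}+jF_k)`. -/
theorem stmt_15 (k j : ℕ) (hk : 1 ≤ k) (hj : 1 ≤ j) :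
    cfVal (6 :: ((List.replicate (k - 1) ([1, 5] : List ℕ)).flatten ++ [1]))
      = Fq (k + 1) / Fq k ∧
    cfVal (6 :: (List.replicate k ([1, 5] : List ℕ)).flatten)
      = Lq (k + 1) / Lq k ∧
    cfVal (6 :: ((List.replicate (k - 1) ([1, 5] : List ℕ)).flatten ++ [1, 6, j]))
      = (Fq (k + 1) + j * Fq (k + 2)) / (Fq k + j * Fq (k + 1)) ∧
    cfVal (6 :: ((List.replicate (k - 1) ([1, 5] : List ℕ)).flatten ++ [1, j]))
      = (Lq k + j * Fq (k + 1)) / (Lq (k - 1) + j * Fq k) := by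

  obtain ⟨m, rfl⟩ : ∃ m, k = m + 1 := ⟨k - 1, by omega⟩
  simp only [Nat.add_sub_cancel]
  have hjQ : (1:ℚ) ≤ (j:ℚ) := by exact_mod_cast hj
  have hj0 : (j:ℚ) ≠ 0 := by intro h; rw [h] at hjQ; norm_num at hjQ
  have hjnn : (0:ℚ) ≤ (j:ℚ) := by linarith
  have r1 : Fq (m+1) = 7 * Fq m - Gq m := Fq_rec m
  have r2 : Fq (m+1+1) = 7 * Fq (m+1) - Fq m := by rw [Fq_rec (m+1), Gq_succ]
  have r3 : Fq (m+1+2) = 7 * Fq (m+1+1) - Fq (m+1) := by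
    have := Fq_rec (m+2)
    rw [Gq_succ] at this
    exact this
  have l1 : Lq m = 6 * Fq m - Gq m := Lq_eq m
  have l2 : Lq (m+1) = 6 * Fq (m+1) - Fq m := by rw [Lq_eq (m+1), Gq_succ]
  have l3 : Lq (m+1+1) = 6 * Fq (m+1+1) - Fq (m+1) := by
    have := Lq_eq (m+2)
    rw [Gq_succ] at this
    exact this
  have pF1 := Fq_pos m
  have pF2 := Fq_pos (m+1)
  have pL0 := Lq_pos m
  have pL1 := Lq_pos (m+1)
  have c1 : cfVal (6 :: [1]) = 7 := by norm_num [cfVal]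
  have c0 : cfVal (6 :: ([] : List ℕ)) = 6 := by norm_num [cfVal]
  have c3 : cfVal (6 :: [1, 6, j]) = (48*j+7)/(7*j+1) := by
    have d0 : (0:ℚ) < (j:ℚ) := by linarith
    have d1 : (0:ℚ) < 6 + 1/(j:ℚ) := by positivity
    have d2 : (0:ℚ) < 1 + 1/(6 + 1/(j:ℚ)) := by positivity
    have d3 : (0:ℚ) < 7*(j:ℚ)+1 := by positivity
    have n0 := ne_of_gt d0
    have n1 := ne_of_gt d1
    have n2 := ne_of_gt d2
    have n3 := ne_of_gt d3
    simp only [cfVal]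
    push_cast
    field_simp
    ring
  have c4 : cfVal (6 :: [1, j]) = (7*j+6)/(j+1) := by
    have d0 : (0:ℚ) < (j:ℚ) := by linarith
    have d1 : (0:ℚ) < 1 + 1/(j:ℚ) := by positivity
    have d3 : (0:ℚ) < (j:ℚ)+1 := by positivity
    have n0 := ne_of_gt d0
    have n1 := ne_of_gt d1
    have n3 := ne_of_gt d3
    simp only [cfVal]
    push_cast
    field_simp
    ring
  refine ⟨?_, ?_, ?_, ?_⟩
  · -- (i) first
    have hD := masterD m [1]
    rw [c1] at hD
    rw [master m [1], c1, div_eq_div_iff hD (ne_of_gt pF1), r2, r1]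
    ring
  · -- (i) second
    have hD := masterD (m+1) []
    rw [c0] at hD
    rw [show (List.replicate (m+1) ([1,5] : List ℕ)).flatten
        = (List.replicate (m+1) ([1,5] : List ℕ)).flatten ++ [] from (List.append_nil _).symm]
    rw [master (m+1) [], c0, div_eq_div_iff hD (ne_of_gt pL1), Gq_succ, l3, l2, r2, r1]
    ring
  · -- (ii)
    have hD := masterD m [1, 6, j]
    have hden : (0:ℚ) < Fq (m+1) + j * Fq (m+1+1) := by
      have := mul_nonneg hjnn (le_of_lt pF2)
      linarith
    rw [master m [1, 6, j], div_eq_div_iff hD (ne_of_gt hden), c3, r3, r2, r1]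
    have d3 : (7*(j:ℚ)+1) ≠ 0 := by positivity
    field_simp
    ring
  · -- (iii)
    have hD := masterD m [1, j]
    have hden : (0:ℚ) < Lq m + j * Fq (m+1) := by
      have := mul_nonneg hjnn (le_of_lt pF1)
      linarith
    rw [master m [1, j], div_eq_div_iff hD (ne_of_gt hden), c4, l2, l1, r2, r1]
    have d3 : ((j:ℚ)+1) ≠ 0 := by positivity
    field_simp
    ring
end

section
/- Fix an integer k ≥ 1 and, for integers j ≥ 1, set u_k(j) = (F_{k+1} + j F_{k+2})/(F_k + j F_{k+1}) and v_k(j) = (L_k + j F_{k+1})/(L_{k−1} + j F_k). Then, as real numbers: (i) (u_k(j+1) + 1)/3 > √(u_k(j)) for all integers j ≥ 1; (ii) (v_k(j) + 1)/3 > √(v_k(j+1)) for all integers j ≥ 7. (In the paper's notation, φ(u_k(j+1)) > ψ(u_k(j)) and φ(v_k(j)) > ψ(v_k(j+1)), where φ(a) = (a+1)/3 and ψ(a) = √a.) -/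
/-- `F_k = f_{4k}/3`, as a real number. -/
noncomputable def FR (k : ℕ) : ℝ := (Nat.fib (4 * k) : ℝ) / 3

/-- `L_k = ℓ_{4k+2}/3`, as a real number. -/
noncomputable def LR (k : ℕ) : ℝ := (luc (4 * k + 2) : ℝ) / 3

/-- `u_k(j) = (F_{k+1} + jF_{k+2})/(F_k + jF_{k+1}) = [6;(1,5)^{k−1},1,6,j]`. -/
noncomputable def uR (k j : ℕ) : ℝ := (FR (k + 1) + j * FR (k + 2)) / (FR k + j * FR (k + 1))

/-- `v_k(j) = (L_k + jF_{k+1})/(L_{k−1} + jF_k) = [6;(1,5)^{k−1},1,j]`. -/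
noncomputable def vR (k j : ℕ) : ℝ := (LR k + j * FR (k + 1)) / (LR (k - 1) + j * FR k)

lemma fib_add_eight_add_fib (n : ℕ) : Nat.fib (n + 8) + Nat.fib n = 7 * Nat.fib (n + 4) := by
  have h2 := Nat.fib_add_two (n := n)
  have h3 := Nat.fib_add_two (n := n + 1)
  have h4 := Nat.fib_add_two (n := n + 2)
  have h5 := Nat.fib_add_two (n := n + 3)
  have h6 := Nat.fib_add_two (n := n + 4)
  have h7 := Nat.fib_add_two (n := n + 5)
  have h8 := Nat.fib_add_two (n := n + 6)
  simp only [add_assoc, Nat.reduceAdd] at h2 h3 h4 h5 h6 h7 h8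
  omega

lemma luc_add_two_add_fib (n : ℕ) : luc (n + 2) + Nat.fib n = Nat.fib (n + 4) := by
  have h2 := Nat.fib_add_two (n := n)
  have h3 := Nat.fib_add_two (n := n + 1)
  have h4 := Nat.fib_add_two (n := n + 2)
  rw [luc, show n + 2 - 1 = n + 1 by omega]
  simp only [add_assoc, Nat.reduceAdd] at h2 h3 h4 ⊢
  omega

lemma FR_add_two_add_FR (k : ℕ) : FR (k + 2) + FR k = 7 * FR (k + 1) := by
  have h : (Nat.fib (4 * k + 8) : ℝ) + Nat.fib (4 * k) = 7 * Nat.fib (4 * k + 4) := by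
    exact_mod_cast fib_add_eight_add_fib (4 * k)
  simp only [FR, mul_add]
  linarith

lemma LR_eq_FR_succ_sub_FR (k : ℕ) : LR k = FR (k + 1) - FR k := by
  have h : (luc (4 * k + 2) : ℝ) + Nat.fib (4 * k) = Nat.fib (4 * k + 4) := by
    exact_mod_cast luc_add_two_add_fib (4 * k)
  simp only [LR, FR, mul_add]
  linarith

lemma FR_succ_sq_sub_mul_add_sq (k : ℕ) :
    FR (k + 1) ^ 2 - 7 * FR k * FR (k + 1) + FR k ^ 2 = 1 := by
  induction k with
  | zero => norm_num [FR]
  | succ k ih => linear_combination ih + (FR (k + 2) - FR k) * FR_add_two_add_FR k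

lemma FR_nonneg (k : ℕ) : 0 ≤ FR k := by
  unfold FR
  positivity

lemma FR_pos {k : ℕ} (hk : 0 < k) : 0 < FR k := by
  have : 0 < Nat.fib (4 * k) := Nat.fib_pos.2 (by omega)
  unfold FR
  positivity

lemma FR_le_FR_succ (k : ℕ) : FR k ≤ FR (k + 1) := by
  have : Nat.fib (4 * k) ≤ Nat.fib (4 * (k + 1)) := Nat.fib_mono (by omega)
  unfold FR
  gcongr

lemma sqrt_div_lt_div_add_one_div_three {a b c d : ℝ} (hb : 0 < b) (hc : 0 ≤ c) (hd : 0 < d)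
    (h : 9 * a * d ^ 2 < (c + d) ^ 2 * b) : √(a / b) < (c / d + 1) / 3 := by
  have hcd : (c / d + 1) / 3 = (c + d) / (3 * d) := by
    field_simp
  rw [hcd, Real.sqrt_lt' (by positivity), div_pow, div_lt_div_iff₀ hb (by positivity)]
  linarith

section Zigzag

variable {x y J : ℝ}

lemma sqrt_ratio_lt_succ_ratio_add_one_div_three (z : ℝ) (hx : 0 ≤ x) (hy : 0 < y)
    (hz : 0 ≤ z) (hrec : z + x = 7 * y) (hconic : y ^ 2 - 7 * x * y + x ^ 2 = 1) (hJ : 1 ≤ J) :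
    √((y + J * z) / (x + J * y)) < ((y + (J + 1) * z) / (x + (J + 1) * y) + 1) / 3 := by
  obtain rfl : z = 7 * y - x := by linarith
  set G := x * J ^ 2 + 9 * x * J + y * J ^ 3 + 9 * y * J ^ 2 - 9 * y
  have hG : 0 < G := by
    have : 0 ≤ x * (J ^ 2 + 9 * J) := by positivity
    nlinarith [mul_le_mul_of_nonneg_left (show 1 ≤ J ^ 3 by nlinarith) hy.le]
  apply sqrt_div_lt_div_add_one_div_three (by positivity) (by positivity) (by positivity)
  linear_combination hG - G * hconic

lemma sqrt_succ_ratio_lt_ratio_add_one_div_three (a : ℝ) (hx : 0 < x) (hxy : x ≤ y)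
    (hrec : y + a = 7 * x) (hconic : y ^ 2 - 7 * x * y + x ^ 2 = 1) (hJ : 7 ≤ J) :
    √(((y - x) + (J + 1) * y) / ((x - a) + (J + 1) * x))
      < ((((y - x) + J * y) / ((x - a) + J * x)) + 1) / 3 := by
  obtain rfl : a = 7 * x - y := by linarith
  set G := x * (J ^ 3 - 10 * J ^ 2 + 11 * J + 79) + y * (J ^ 2 - 5 * J - 14)
  have hG : 0 < G := by
    have h7 : 0 ≤ J - 7 := by linarith
    -- `J³ - 10J² + 11J + 79 = (J - 7)(J² - 3J - 10) + 9` and `J² - 5J - 14 = (J - 7)(J + 2)`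
    have hcubic : 9 ≤ J ^ 3 - 10 * J ^ 2 + 11 * J + 79 := by
      nlinarith [mul_nonneg h7 (show 0 ≤ J ^ 2 - 3 * J - 10 by nlinarith)]
    nlinarith [mul_le_mul_of_nonneg_left hcubic hx.le, mul_nonneg (hx.le.trans hxy)
      (mul_nonneg h7 (show 0 ≤ J + 2 by linarith))]
  apply sqrt_div_lt_div_add_one_div_three (by nlinarith) (by nlinarith) (by nlinarith)
  linear_combination hG - G * hconic

end Zigzag

/-- **Lemma 4.9 (le:zigzag).** Fix `k ≥ 1`.  With `φ(a) = (a+1)/3` and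
`ψ(a) = √a`:
(i) `φ(u_k(j+1)) > ψ(u_k(j))` for all `j ≥ 1`;
(ii) `φ(v_k(j)) > ψ(v_k(j+1))` for all `j ≥ 7`. -/
theorem stmt_17 (k : ℕ) (hk : 1 ≤ k) :
    (∀ j : ℕ, 1 ≤ j → Real.sqrt (uR k j) < (uR k (j + 1) + 1) / 3) ∧
    (∀ j : ℕ, 7 ≤ j → Real.sqrt (vR k (j + 1)) < (vR k j + 1) / 3) := by
  obtain ⟨m, rfl⟩ : ∃ m, k = m + 1 := ⟨k - 1, by omega⟩
  constructor
  · intro j hj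
    have := sqrt_ratio_lt_succ_ratio_add_one_div_three (J := j) _ (FR_nonneg (m + 1))
      (FR_pos (by omega)) (FR_nonneg _) (FR_add_two_add_FR _) (FR_succ_sq_sub_mul_add_sq _)
      (by exact_mod_cast hj)
    simpa only [uR, Nat.cast_add, Nat.cast_one] using this
  · intro j hj
    have := sqrt_succ_ratio_lt_ratio_add_one_div_three (J := j) _ (FR_pos (by omega))
      (FR_le_FR_succ _) (FR_add_two_add_FR m) (FR_succ_sq_sub_mul_add_sq _) (by exact_mod_cast hj)
    simpa only [vR, LR_eq_FR_succ_sub_FR, Nat.add_sub_cancel, Nat.cast_add, Nat.cast_one]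
      using this
end
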